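/- arXiv:2211.01090 — 4 statements merged into one kernel-verified Lean document; each statement's English description precedes it below -/
import Mathlib

section
/- For the balanced Rudin–Shapiro sequence, for every n ≥ 1 and every ℓ ∈ ℤ: η^{(4)}(2, 2^{n+1}(2ℓ+1), 2^{n+1}(2ℓ+1)+2) = 1 − 3/2^n. -/
open Filter Finset

namespace RSaux4

noncomputable def avg (x : ℤ → ℝ) (N : ℕ) : ℝ :=
  (1 / (2 * (N : ℝ) + 1)) * ∑ i ∈ Finset.Icc (-(N : ℤ)) (N : ℤ), x i

lemma avg_const (c : ℝ) : Tendsto (avg (fun _ => c)) atTop (nhds c) := by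
  have h : avg (fun _ => c) = fun _ => c := by
    funext N
    unfold avg
    rw [Finset.sum_const, Int.card_Icc]
    have h1 : ((N:ℤ) + 1 - (-(N:ℤ))).toNat = 2*N+1 := by omega
    rw [h1, nsmul_eq_mul]
    have h2 : (2*(N:ℝ)+1) ≠ 0 := by positivity
    push_cast
    field_simp
  rw [h]; exact tendsto_const_nhds

lemma avg_const_mul (c : ℝ) (x : ℤ → ℝ) (N : ℕ) :
    avg (fun i => c * x i) N = c * avg x N := by
  unfold avg; rw [Finset.mul_sum]; rw [← Finset.mul_sum, ← Finset.mul_sum]; ring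

lemma tendsto_avg_const_mul {x : ℤ → ℝ} {L : ℝ} (c : ℝ)
    (h : Tendsto (avg x) atTop (nhds L)) :
    Tendsto (avg (fun i => c * x i)) atTop (nhds (c * L)) := by
  have : avg (fun i => c * x i) = fun N => c * avg x N := funext (avg_const_mul c x)
  rw [this]; exact h.const_mul c

lemma inv_lin_tendsto (b c : ℝ) (hb : 0 < b) :
    Tendsto (fun N : ℕ => 1 / (b * (N:ℝ) + c)) atTop (nhds 0) := by
  simp only [one_div]
  apply Tendsto.comp tendsto_inv_atTop_zero
  apply Filter.tendsto_atTop_add_const_right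
  exact (tendsto_natCast_atTop_atTop (R := ℝ)).const_mul_atTop hb

lemma sum_abs_le_card (x : ℤ → ℝ) (hb : ∀ i, |x i| ≤ 1) (C : Finset ℤ) :
    |∑ m ∈ C, x m| ≤ (C.card : ℝ) := by
  calc |∑ m ∈ C, x m| ≤ ∑ m ∈ C, |x m| := Finset.abs_sum_le_sum_abs _ _
    _ ≤ C.card • (1:ℝ) := Finset.sum_le_card_nsmul _ _ _ (fun i _ => hb i)
    _ = C.card := by simp

lemma sum_shift (x : ℤ → ℝ) (S a b : ℤ) :
    ∑ m ∈ Finset.Icc a b, x (m + S) = ∑ i ∈ Finset.Icc (a+S) (b+S), x i := by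
  rw [← Finset.map_add_right_Icc a b S, Finset.sum_map]
  rfl

lemma sum_diff_bound (x : ℤ → ℝ) (hb : ∀ i, |x i| ≤ 1) (S : ℤ) (M : ℕ) :
    |∑ m ∈ Finset.Icc (-(M:ℤ)+S) ((M:ℤ)+S), x m - ∑ m ∈ Finset.Icc (-(M:ℤ)) (M:ℤ), x m|
      ≤ 2 * S.natAbs := by
  set A := Finset.Icc (-(M:ℤ)+S) ((M:ℤ)+S) with hA
  set B := Finset.Icc (-(M:ℤ)) (M:ℤ) with hB
  rw [← Finset.sum_sdiff_sub_sum_sdiff]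
  have cAB : ((A \ B).card : ℝ) ≤ (S.natAbs : ℝ) := by
    have hsub : A \ B ⊆ Finset.Icc ((M:ℤ)+1) ((M:ℤ)+S) ∪ Finset.Icc (-(M:ℤ)+S) (-(M:ℤ)-1) := by
      intro x hx
      simp only [hA, hB, Finset.mem_sdiff, Finset.mem_Icc, Finset.mem_union] at hx ⊢
      omega
    have := (Finset.card_le_card hsub).trans (Finset.card_union_le _ _)
    rw [Int.card_Icc, Int.card_Icc] at this
    have : (A \ B).card ≤ S.natAbs := by omega
    exact_mod_cast this
  have cBA : ((B \ A).card : ℝ) ≤ (S.natAbs : ℝ) := by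
    have hsub : B \ A ⊆ Finset.Icc (-(M:ℤ)) (-(M:ℤ)+S-1) ∪ Finset.Icc ((M:ℤ)+S+1) (M:ℤ) := by
      intro x hx
      simp only [hA, hB, Finset.mem_sdiff, Finset.mem_Icc, Finset.mem_union] at hx ⊢
      omega
    have := (Finset.card_le_card hsub).trans (Finset.card_union_le _ _)
    rw [Int.card_Icc, Int.card_Icc] at this
    have : (B \ A).card ≤ S.natAbs := by omega
    exact_mod_cast this
  calc |∑ m ∈ A \ B, x m - ∑ m ∈ B \ A, x m|
      ≤ |∑ m ∈ A \ B, x m| + |∑ m ∈ B \ A, x m| := abs_sub _ _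
    _ ≤ ((A \ B).card : ℝ) + ((B \ A).card : ℝ) := by
        exact add_le_add (sum_abs_le_card x hb _) (sum_abs_le_card x hb _)
    _ ≤ 2 * S.natAbs := by linarith

lemma sum_Ico_split (f : ℤ → ℝ) {a b c : ℤ} (hab : a ≤ b) (hbc : b ≤ c) :
    ∑ i ∈ Finset.Ico a c, f i = ∑ i ∈ Finset.Ico a b, f i + ∑ i ∈ Finset.Ico b c, f i := by
  rw [← Finset.Ico_union_Ico_eq_Ico hab hbc,
    Finset.sum_union (Finset.Ico_disjoint_Ico_consecutive a b c)]

lemma sum_Ico_one (f : ℤ → ℝ) (j k : ℤ) (h : k = j + 1) :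
    ∑ i ∈ Finset.Ico j k, f i = f j := by
  have : Finset.Ico j k = {j} := by ext x; simp [h]; omega
  rw [this, Finset.sum_singleton]

lemma sum_Ico_four (f : ℤ → ℝ) (j : ℤ) :
    ∑ i ∈ Finset.Ico j (j+4), f i = f j + f (j+1) + f (j+2) + f (j+3) := by
  rw [sum_Ico_split f (by omega : j ≤ j+1) (by omega : j+1 ≤ j+4),
    sum_Ico_one f j (j+1) rfl,
    sum_Ico_split f (by omega : j+1 ≤ j+2) (by omega : j+2 ≤ j+4),
    sum_Ico_one f (j+1) (j+2) (by ring),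
    sum_Ico_split f (by omega : j+2 ≤ j+3) (by omega : j+3 ≤ j+4),
    sum_Ico_one f (j+2) (j+3) (by ring),
    sum_Ico_one f (j+3) (j+4) (by ring)]
  ring

lemma sum_four_block (f g : ℤ → ℝ)
    (hfg : ∀ m, f (4*m) + f (4*m+1) + f (4*m+2) + f (4*m+3) = g m)
    (k : ℕ) (c : ℤ) :
    ∑ i ∈ Finset.Ico (4*c) (4*c + 4*(k:ℤ)), f i = ∑ m ∈ Finset.Ico c (c + (k:ℤ)), g m := by
  induction k with
  | zero => simp
  | succ k ih =>
    have e : (4*c + 4*(((k:ℕ)+1:ℕ)):ℤ) = 4*c + 4*(k:ℤ) + 4 := by push_cast; ring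
    have e5 : (c + (((k:ℕ)+1:ℕ)):ℤ) = (c + (k:ℤ)) + 1 := by push_cast; ring
    rw [e, e5,
      sum_Ico_split f (by omega : (4*c:ℤ) ≤ 4*c+4*(k:ℤ)) (by omega : (4*c+4*(k:ℤ):ℤ) ≤ 4*c+4*(k:ℤ)+4),
      ih,
      sum_Ico_split g (by omega : (c:ℤ) ≤ c+(k:ℤ)) (by omega : (c+(k:ℤ):ℤ) ≤ c+(k:ℤ)+1),
      sum_Ico_one g (c+(k:ℤ)) (c+(k:ℤ)+1) rfl]
    have e3 : (4*c + 4*(k:ℤ) + 4 : ℤ) = 4*(c+(k:ℤ)) + 4 := by ring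
    have e2 : (4*c + 4*(k:ℤ) : ℤ) = 4*(c + (k:ℤ)) := by ring
    rw [e3, e2, sum_Ico_four, hfg (c+(k:ℤ))]

lemma tendsto_avg_shift (x : ℤ → ℝ) (hb : ∀ i, |x i| ≤ 1) (S : ℤ) {L : ℝ}
    (h : Tendsto (avg x) atTop (nhds L)) :
    Tendsto (avg (fun m => x (m + S))) atTop (nhds L) := by
  have key : ∀ N : ℕ, avg (fun m => x (m + S)) N
      = avg x N + (1 / (2*(N:ℝ)+1)) *
        (∑ m ∈ Finset.Icc (-(N:ℤ)+S) ((N:ℤ)+S), x m - ∑ m ∈ Finset.Icc (-(N:ℤ)) (N:ℤ), x m) := by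
    intro N
    unfold avg
    rw [sum_shift]
    ring
  have h2 : Tendsto (fun N : ℕ => (1 / (2*(N:ℝ)+1)) *
      (∑ m ∈ Finset.Icc (-(N:ℤ)+S) ((N:ℤ)+S), x m - ∑ m ∈ Finset.Icc (-(N:ℤ)) (N:ℤ), x m))
      atTop (nhds 0) := by
    apply squeeze_zero_norm (a := fun N : ℕ => (1/(2*(N:ℝ)+1)) * (2 * S.natAbs))
    · intro N
      rw [Real.norm_eq_abs, abs_mul]
      have h3 : |1 / (2*(N:ℝ)+1)| = 1/(2*(N:ℝ)+1) := abs_of_pos (by positivity)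
      rw [h3]
      exact mul_le_mul_of_nonneg_left (sum_diff_bound x hb S N) (by positivity)
    · have := (inv_lin_tendsto 2 1 (by norm_num)).mul_const (2 * (S.natAbs:ℝ))
      simpa using this
  have := h.add h2
  rw [add_zero] at this
  exact this.congr (fun N => (key N).symm)

lemma Icc_eq_Ico (a b : ℤ) : Finset.Icc a b = Finset.Ico a (b+1) := by
  ext x; simp

lemma sum_Ico_three (f : ℤ → ℝ) (j k : ℤ) (h : k = j + 3) :
    ∑ i ∈ Finset.Ico j k, f i = f j + f (j+1) + f (j+2) := by
  subst h
  rw [sum_Ico_split f (by omega : j ≤ j+1) (by omega : j+1 ≤ j+3),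
    sum_Ico_one f j (j+1) rfl,
    sum_Ico_split f (by omega : j+1 ≤ j+2) (by omega : j+2 ≤ j+3),
    sum_Ico_one f (j+1) (j+2) (by ring),
    sum_Ico_one f (j+2) (j+3) (by ring)]
  ring

lemma split4 {f p0 p1 p2 p3 : ℤ → ℝ}
    (hb : ∀ i, |f i| ≤ 1)
    (hf : ∀ m, f (4*m) = p0 m ∧ f (4*m+1) = p1 m ∧ f (4*m+2) = p2 m ∧ f (4*m+3) = p3 m)
    {L L0 L1 L2 L3 : ℝ}
    (hT : Tendsto (avg f) atTop (nhds L))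
    (hT0 : Tendsto (avg p0) atTop (nhds L0))
    (hT1 : Tendsto (avg p1) atTop (nhds L1))
    (hT2 : Tendsto (avg p2) atTop (nhds L2))
    (hT3 : Tendsto (avg p3) atTop (nhds L3)) :
    L = (L0 + L1 + L2 + L3) / 4 := by
  set g : ℤ → ℝ := fun m => p0 m + p1 m + p2 m + p3 m with hg
  have hfg : ∀ m, f (4*m) + f (4*m+1) + f (4*m+2) + f (4*m+3) = g m := by
    intro m
    obtain ⟨a0, a1, a2, a3⟩ := hf m
    rw [a0, a1, a2, a3]
  have hsum : ∀ M : ℕ, ∑ i ∈ Finset.Icc (-(4*(M:ℤ)+3)) (4*(M:ℤ)+3), f i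
      = (f (-(4*(M:ℤ)+3)) + f (-(4*(M:ℤ)+3)+1) + f (-(4*(M:ℤ)+3)+2))
        + ∑ m ∈ Finset.Icc (-(M:ℤ)) (M:ℤ), g m := by
    intro M
    rw [Icc_eq_Ico, Icc_eq_Ico]
    rw [sum_Ico_split f (by omega : (-(4*(M:ℤ)+3)) ≤ -(4*(M:ℤ))) (by omega : (-(4*(M:ℤ)):ℤ) ≤ 4*(M:ℤ)+3+1)]
    rw [sum_Ico_three f _ _ (by ring : (-(4*(M:ℤ)) : ℤ) = -(4*(M:ℤ)+3) + 3)]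
    have e1 : (-(4*(M:ℤ)) : ℤ) = 4*(-(M:ℤ)) := by ring
    have e2 : (4*(M:ℤ)+3+1 : ℤ) = 4*(-(M:ℤ)) + 4*((2*M+1 : ℕ):ℤ) := by push_cast; ring
    rw [e1, e2, sum_four_block f g hfg (2*M+1) (-(M:ℤ))]
    have e4 : (-(M:ℤ)) + ((2*M+1:ℕ):ℤ) = (M:ℤ) + 1 := by push_cast; ring
    rw [e4]
  have key : ∀ M : ℕ, avg f (4*M+3)
      = ((2*(M:ℝ)+1)/(8*(M:ℝ)+7)) * (avg p0 M + avg p1 M + avg p2 M + avg p3 M)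
        + (1/(8*(M:ℝ)+7)) * (f (-(4*(M:ℤ)+3)) + f (-(4*(M:ℤ)+3)+1) + f (-(4*(M:ℤ)+3)+2)) := by
    intro M
    unfold avg
    have ecast : ((4*M+3 : ℕ) : ℤ) = 4*(M:ℤ)+3 := by push_cast; ring
    rw [ecast, hsum M]
    have hgs : ∑ m ∈ Finset.Icc (-(M:ℤ)) (M:ℤ), g m
        = ∑ m ∈ Finset.Icc (-(M:ℤ)) (M:ℤ), p0 m + ∑ m ∈ Finset.Icc (-(M:ℤ)) (M:ℤ), p1 m
          + ∑ m ∈ Finset.Icc (-(M:ℤ)) (M:ℤ), p2 m + ∑ m ∈ Finset.Icc (-(M:ℤ)) (M:ℤ), p3 m := by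
      rw [hg]
      rw [Finset.sum_add_distrib, Finset.sum_add_distrib, Finset.sum_add_distrib]
    rw [hgs]
    have h1 : (2*((4*M+3:ℕ):ℝ)+1) = 8*(M:ℝ)+7 := by push_cast; ring
    rw [h1]
    have h2 : (8*(M:ℝ)+7) ≠ 0 := by positivity
    have h3 : (2*(M:ℝ)+1) ≠ 0 := by positivity
    field_simp
    ring
  have hratio : Tendsto (fun M : ℕ => (2*(M:ℝ)+1)/(8*(M:ℝ)+7)) atTop (nhds (1/4)) := by
    have heq : (fun M : ℕ => (2*(M:ℝ)+1)/(8*(M:ℝ)+7))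
        = fun M : ℕ => 1/4 - (3/4) * (1/(8*(M:ℝ)+7)) := by
      funext M
      have h2 : (8*(M:ℝ)+7) ≠ 0 := by positivity
      field_simp
      ring
    rw [heq]
    have h5 := (inv_lin_tendsto 8 7 (by norm_num)).const_mul (3/4 : ℝ)
    have h4 := (tendsto_const_nhds (x := (1/4 : ℝ)) (f := atTop (α := ℕ))).sub h5
    simpa using h4
  have hbnd : Tendsto (fun M : ℕ => (1/(8*(M:ℝ)+7)) * (f (-(4*(M:ℤ)+3)) + f (-(4*(M:ℤ)+3)+1) + f (-(4*(M:ℤ)+3)+2))) atTop (nhds 0) := by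
    apply squeeze_zero_norm (a := fun M : ℕ => (1/(8*(M:ℝ)+7)) * 3)
    · intro M
      rw [Real.norm_eq_abs, abs_mul]
      have h3 : |1 / (8*(M:ℝ)+7)| = 1/(8*(M:ℝ)+7) := abs_of_pos (by positivity)
      rw [h3]
      apply mul_le_mul_of_nonneg_left _ (by positivity)
      calc |f (-(4*(M:ℤ)+3)) + f (-(4*(M:ℤ)+3)+1) + f (-(4*(M:ℤ)+3)+2)|
          ≤ |f (-(4*(M:ℤ)+3)) + f (-(4*(M:ℤ)+3)+1)| + |f (-(4*(M:ℤ)+3)+2)| := abs_add_le _ _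
        _ ≤ |f (-(4*(M:ℤ)+3))| + |f (-(4*(M:ℤ)+3)+1)| + |f (-(4*(M:ℤ)+3)+2)| := by
            have := abs_add_le (f (-(4*(M:ℤ)+3))) (f (-(4*(M:ℤ)+3)+1))
            linarith
        _ ≤ 3 := by
            have b1 := hb (-(4*(M:ℤ)+3)); have b2 := hb (-(4*(M:ℤ)+3)+1); have b3 := hb (-(4*(M:ℤ)+3)+2)
            linarith
    · have := (inv_lin_tendsto 8 7 (by norm_num)).mul_const (3:ℝ)
      simpa using this
  have hsub : Tendsto (fun M : ℕ => avg f (4*M+3)) atTop (nhds L) := by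
    apply hT.comp
    exact tendsto_atTop_mono (fun M => by omega : ∀ M : ℕ, M ≤ 4*M+3) tendsto_id
  have hlim2 : Tendsto (fun M : ℕ => avg p0 M + avg p1 M + avg p2 M + avg p3 M) atTop
      (nhds (L0+L1+L2+L3)) := ((hT0.add hT1).add hT2).add hT3
  have hrhs : Tendsto (fun M : ℕ => ((2*(M:ℝ)+1)/(8*(M:ℝ)+7)) * (avg p0 M + avg p1 M + avg p2 M + avg p3 M)
        + (1/(8*(M:ℝ)+7)) * (f (-(4*(M:ℤ)+3)) + f (-(4*(M:ℤ)+3)+1) + f (-(4*(M:ℤ)+3)+2))) atTop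
      (nhds ((1/4) * (L0+L1+L2+L3) + 0)) := (hratio.mul hlim2).add hbnd
  have hu := tendsto_nhds_unique (hsub.congr key) hrhs
  rw [hu]; ring

noncomputable def S4 (a : ℤ → ℝ) (m₁ m₂ m₃ : ℤ) : ℤ → ℝ :=
  fun i => a i * a (i+m₁) * a (i+m₂) * a (i+m₃)

noncomputable def T4 (a : ℤ → ℝ) (m₁ m₂ m₃ : ℤ) : ℤ → ℝ :=
  fun i => (-1:ℝ)^i * a i * a (i+m₁) * a (i+m₂) * a (i+m₃)

lemma hpm : ∀ m : ℤ, (-1:ℝ)^m = 1 ∨ (-1:ℝ)^m = -1 := fun m =>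
  (Int.even_or_odd m).elim (fun h => Or.inl (Even.neg_one_zpow h))
    (fun h => Or.inr (Odd.neg_one_zpow h))

lemma zadd : ∀ x y : ℤ, (-1:ℝ)^(x+y) = (-1)^x * (-1)^y :=
  fun x y => zpow_add₀ (by norm_num) x y

lemma S4_bound (a : ℤ → ℝ) (ha : ∀ i, a i = 1 ∨ a i = -1) (m₁ m₂ m₃ : ℤ) :
    ∀ i, |S4 a m₁ m₂ m₃ i| ≤ 1 := by
  intro i
  unfold S4
  rcases ha i with h|h <;> rcases ha (i+m₁) with h1|h1 <;> rcases ha (i+m₂) with h2|h2 <;>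
    rcases ha (i+m₃) with h3|h3 <;> rw [h, h1, h2, h3] <;> norm_num

lemma T4_bound (a : ℤ → ℝ) (ha : ∀ i, a i = 1 ∨ a i = -1) (m₁ m₂ m₃ : ℤ) :
    ∀ i, |T4 a m₁ m₂ m₃ i| ≤ 1 := by
  intro i
  unfold T4
  rcases hpm i with h0|h0 <;> rcases ha i with h|h <;> rcases ha (i+m₁) with h1|h1 <;>
    rcases ha (i+m₂) with h2|h2 <;> rcases ha (i+m₃) with h3|h3 <;>
    rw [h0, h, h1, h2, h3] <;> norm_num

lemma rel_R1 (a : ℤ → ℝ) (ha : ∀ i, a i = 1 ∨ a i = -1)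
    (hrec : ∀ m : ℤ, a (4 * m) = a m ∧ a (4 * m + 1) = a m ∧
      a (4 * m + 2) = (-1 : ℝ) ^ m * a m ∧ a (4 * m + 3) = -((-1 : ℝ) ^ m) * a m)
    (T : ℤ) {L L2 : ℝ}
    (hT : Tendsto (avg (S4 a 2 (4*T) (4*T+2))) atTop (nhds L))
    (hT2 : Tendsto (avg (S4 a 1 T (T+1))) atTop (nhds L2)) :
    L = (-1:ℝ)^T * (1 + L2) / 2 := by
  have hf : ∀ m, S4 a 2 (4*T) (4*T+2) (4*m) = (fun _ : ℤ => (-1:ℝ)^T) m ∧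
      S4 a 2 (4*T) (4*T+2) (4*m+1) = (fun _ : ℤ => (-1:ℝ)^T) m ∧
      S4 a 2 (4*T) (4*T+2) (4*m+2) = (fun i => (-1:ℝ)^T * S4 a 1 T (T+1) i) m ∧
      S4 a 2 (4*T) (4*T+2) (4*m+3) = (fun i => (-1:ℝ)^T * S4 a 1 T (T+1) i) m := by
    intro m
    simp only [S4]
    refine ⟨?_, ?_, ?_, ?_⟩
    · have e1 : (4*m+(4*T) : ℤ) = 4*(m+T) := by ring
      have e2 : (4*m+(4*T+2) : ℤ) = 4*(m+T)+2 := by ring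
      rw [e1, e2, (hrec m).1, (hrec m).2.2.1, (hrec (m+T)).1, (hrec (m+T)).2.2.1, zadd m T]
      rcases ha m with hm|hm <;> rcases ha (m+T) with hb|hb <;> rcases hpm m with hp|hp <;>
        rw [hm, hb, hp] <;> ring
    · have e0 : (4*m+1+2 : ℤ) = 4*m+3 := by ring
      have e1 : (4*m+1+(4*T) : ℤ) = 4*(m+T)+1 := by ring
      have e2 : (4*m+1+(4*T+2) : ℤ) = 4*(m+T)+3 := by ring
      rw [e0, e1, e2, (hrec m).2.1, (hrec m).2.2.2, (hrec (m+T)).2.1, (hrec (m+T)).2.2.2,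
        zadd m T]
      rcases ha m with hm|hm <;> rcases ha (m+T) with hb|hb <;> rcases hpm m with hp|hp <;>
        rw [hm, hb, hp] <;> ring
    · have e0 : (4*m+2+2 : ℤ) = 4*(m+1) := by ring
      have e1 : (4*m+2+(4*T) : ℤ) = 4*(m+T)+2 := by ring
      have e2 : (4*m+2+(4*T+2) : ℤ) = 4*(m+T+1) := by ring
      rw [e0, e1, e2, (hrec m).2.2.1, (hrec (m+1)).1, (hrec (m+T)).2.2.1, (hrec (m+T+1)).1,
        zadd m T]
      have e3 : (m+T+1 : ℤ) = m+(T+1) := by ring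
      rw [e3]
      rcases hpm m with hp|hp <;> rw [hp] <;> ring
    · have e0 : (4*m+3+2 : ℤ) = 4*(m+1)+1 := by ring
      have e1 : (4*m+3+(4*T) : ℤ) = 4*(m+T)+3 := by ring
      have e2 : (4*m+3+(4*T+2) : ℤ) = 4*(m+T+1)+1 := by ring
      rw [e0, e1, e2, (hrec m).2.2.2, (hrec (m+1)).2.1, (hrec (m+T)).2.2.2, (hrec (m+T+1)).2.1,
        zadd m T]
      have e3 : (m+T+1 : ℤ) = m+(T+1) := by ring
      rw [e3]
      rcases hpm m with hp|hp <;> rw [hp] <;> ring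
  have h := split4 (S4_bound a ha 2 (4*T) (4*T+2)) hf hT (avg_const _) (avg_const _)
    (tendsto_avg_const_mul ((-1:ℝ)^T) hT2) (tendsto_avg_const_mul ((-1:ℝ)^T) hT2)
  rw [h]; ring

lemma rel_R2 (a : ℤ → ℝ) (ha : ∀ i, a i = 1 ∨ a i = -1)
    (hrec : ∀ m : ℤ, a (4 * m) = a m ∧ a (4 * m + 1) = a m ∧
      a (4 * m + 2) = (-1 : ℝ) ^ m * a m ∧ a (4 * m + 3) = -((-1 : ℝ) ^ m) * a m)
    (S : ℤ) {L L2 : ℝ}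
    (hT : Tendsto (avg (S4 a 1 (4*S) (4*S+1))) atTop (nhds L))
    (hT2 : Tendsto (avg (S4 a 1 S (S+1))) atTop (nhds L2)) :
    L = (2 + (-1:ℝ)^S * (1 + L2)) / 4 := by
  have hf : ∀ m, S4 a 1 (4*S) (4*S+1) (4*m) = (fun _ : ℤ => (1:ℝ)) m ∧
      S4 a 1 (4*S) (4*S+1) (4*m+1) = (fun _ : ℤ => (-1:ℝ)^S) m ∧
      S4 a 1 (4*S) (4*S+1) (4*m+2) = (fun _ : ℤ => (1:ℝ)) m ∧
      S4 a 1 (4*S) (4*S+1) (4*m+3) = (fun i => (-1:ℝ)^S * S4 a 1 S (S+1) i) m := by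
    intro m
    simp only [S4]
    refine ⟨?_, ?_, ?_, ?_⟩
    · have e1 : (4*m+(4*S) : ℤ) = 4*(m+S) := by ring
      have e2 : (4*m+(4*S+1) : ℤ) = 4*(m+S)+1 := by ring
      rw [e1, e2, (hrec m).1, (hrec m).2.1, (hrec (m+S)).1, (hrec (m+S)).2.1]
      rcases ha m with hm|hm <;> rcases ha (m+S) with hb|hb <;> rw [hm, hb] <;> ring
    · have e0 : (4*m+1+1 : ℤ) = 4*m+2 := by ring
      have e1 : (4*m+1+(4*S) : ℤ) = 4*(m+S)+1 := by ring
      have e2 : (4*m+1+(4*S+1) : ℤ) = 4*(m+S)+2 := by ring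
      rw [e0, e1, e2, (hrec m).2.1, (hrec m).2.2.1, (hrec (m+S)).2.1, (hrec (m+S)).2.2.1,
        zadd m S]
      rcases ha m with hm|hm <;> rcases ha (m+S) with hb|hb <;> rcases hpm m with hp|hp <;>
        rw [hm, hb, hp] <;> ring
    · have e0 : (4*m+2+1 : ℤ) = 4*m+3 := by ring
      have e1 : (4*m+2+(4*S) : ℤ) = 4*(m+S)+2 := by ring
      have e2 : (4*m+2+(4*S+1) : ℤ) = 4*(m+S)+3 := by ring
      rw [e0, e1, e2, (hrec m).2.2.1, (hrec m).2.2.2, (hrec (m+S)).2.2.1, (hrec (m+S)).2.2.2,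
        zadd m S]
      rcases ha m with hm|hm <;> rcases ha (m+S) with hb|hb <;> rcases hpm m with hp|hp <;>
        rcases hpm S with hq|hq <;> rw [hm, hb, hp, hq] <;> ring
    · have e0 : (4*m+3+1 : ℤ) = 4*(m+1) := by ring
      have e1 : (4*m+3+(4*S) : ℤ) = 4*(m+S)+3 := by ring
      have e2 : (4*m+3+(4*S+1) : ℤ) = 4*(m+S+1) := by ring
      rw [e0, e1, e2, (hrec m).2.2.2, (hrec (m+1)).1, (hrec (m+S)).2.2.2, (hrec (m+S+1)).1,
        zadd m S]
      have e3 : (m+S+1 : ℤ) = m+(S+1) := by ring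
      rw [e3]
      rcases hpm m with hp|hp <;> rw [hp] <;> ring
  have h := split4 (S4_bound a ha 1 (4*S) (4*S+1)) hf hT (avg_const _) (avg_const _)
    (avg_const _) (tendsto_avg_const_mul ((-1:ℝ)^S) hT2)
  rw [h]; ring

lemma rel_R3 (a : ℤ → ℝ) (ha : ∀ i, a i = 1 ∨ a i = -1)
    (hrec : ∀ m : ℤ, a (4 * m) = a m ∧ a (4 * m + 1) = a m ∧
      a (4 * m + 2) = (-1 : ℝ) ^ m * a m ∧ a (4 * m + 3) = -((-1 : ℝ) ^ m) * a m)
    (S : ℤ) {L C : ℝ}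
    (hT : Tendsto (avg (S4 a 1 (4*S+2) (4*S+2+1))) atTop (nhds L))
    (hC : Tendsto (avg (S4 a 0 0 1)) atTop (nhds C)) :
    L = -(1/2) := by
  rw [show (4*S+2+1 : ℤ) = 4*S+3 from by ring] at hT
  have hf : ∀ m, S4 a 1 (4*S+2) (4*S+3) (4*m) = (fun _ : ℤ => (-1:ℝ)) m ∧
      S4 a 1 (4*S+2) (4*S+3) (4*m+1) = (fun i => (-(-1:ℝ)^S) * S4 a 0 0 1 (i+S)) m ∧
      S4 a 1 (4*S+2) (4*S+3) (4*m+2) = (fun _ : ℤ => (-1:ℝ)) m ∧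
      S4 a 1 (4*S+2) (4*S+3) (4*m+3) = (fun i => ((-1:ℝ)^S) * S4 a 0 0 1 i) m := by
    intro m
    simp only [S4, add_zero]
    refine ⟨?_, ?_, ?_, ?_⟩
    · have e1 : (4*m+(4*S+2) : ℤ) = 4*(m+S)+2 := by ring
      have e2 : (4*m+(4*S+3) : ℤ) = 4*(m+S)+3 := by ring
      rw [e1, e2, (hrec m).1, (hrec m).2.1, (hrec (m+S)).2.2.1, (hrec (m+S)).2.2.2]
      rcases ha m with hm|hm <;> rcases ha (m+S) with hb|hb <;> rcases hpm (m+S) with hp|hp <;>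
        rw [hm, hb, hp] <;> ring
    · have e0 : (4*m+1+1 : ℤ) = 4*m+2 := by ring
      have e1 : (4*m+1+(4*S+2) : ℤ) = 4*(m+S)+3 := by ring
      have e2 : (4*m+1+(4*S+3) : ℤ) = 4*(m+S+1) := by ring
      rw [e0, e1, e2, (hrec m).2.1, (hrec m).2.2.1, (hrec (m+S)).2.2.2, (hrec (m+S+1)).1,
        zadd m S]
      rcases ha m with hm|hm <;> rcases ha (m+S) with hb|hb <;> rcases hpm m with hp|hp <;>
        rw [hm, hb, hp] <;> ring
    · have e0 : (4*m+2+1 : ℤ) = 4*m+3 := by ring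
      have e1 : (4*m+2+(4*S+2) : ℤ) = 4*(m+S+1) := by ring
      have e2 : (4*m+2+(4*S+3) : ℤ) = 4*(m+S+1)+1 := by ring
      rw [e0, e1, e2, (hrec m).2.2.1, (hrec m).2.2.2, (hrec (m+S+1)).1, (hrec (m+S+1)).2.1]
      rcases ha m with hm|hm <;> rcases ha (m+S+1) with hb|hb <;> rcases hpm m with hp|hp <;>
        rw [hm, hb, hp] <;> ring
    · have e0 : (4*m+3+1 : ℤ) = 4*(m+1) := by ring
      have e1 : (4*m+3+(4*S+2) : ℤ) = 4*(m+S+1)+1 := by ring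
      have e2 : (4*m+3+(4*S+3) : ℤ) = 4*(m+S+1)+2 := by ring
      rw [e0, e1, e2, (hrec m).2.2.2, (hrec (m+1)).1, (hrec (m+S+1)).2.1, (hrec (m+S+1)).2.2.1,
        show (m+S+1 : ℤ) = m+S+1 from rfl, zadd (m+S) 1, zadd m S, zpow_one]
      rcases ha m with hm|hm <;> rcases ha (m+S+1) with hb|hb <;> rcases hpm m with hp|hp <;>
        rcases hpm S with hq|hq <;> rw [hm, hb, hp, hq] <;> ring
  have hsh := tendsto_avg_shift (S4 a 0 0 1) (S4_bound a ha 0 0 1) S hC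
  have h := split4 (S4_bound a ha 1 (4*S+2) (4*S+3)) hf hT (avg_const _)
    (tendsto_avg_const_mul (-(-1:ℝ)^S) hsh) (avg_const _)
    (tendsto_avg_const_mul ((-1:ℝ)^S) hC)
  rw [h]; ring

lemma rel_T0 (a : ℤ → ℝ) (ha : ∀ i, a i = 1 ∨ a i = -1)
    (hrec : ∀ m : ℤ, a (4 * m) = a m ∧ a (4 * m + 1) = a m ∧
      a (4 * m + 2) = (-1 : ℝ) ^ m * a m ∧ a (4 * m + 3) = -((-1 : ℝ) ^ m) * a m)
    {L : ℝ}
    (hT : Tendsto (avg (T4 a 0 0 0)) atTop (nhds L)) :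
    L = 0 := by
  have hf : ∀ m, T4 a 0 0 0 (4*m) = (fun _ : ℤ => (1:ℝ)) m ∧
      T4 a 0 0 0 (4*m+1) = (fun _ : ℤ => (-1:ℝ)) m ∧
      T4 a 0 0 0 (4*m+2) = (fun _ : ℤ => (1:ℝ)) m ∧
      T4 a 0 0 0 (4*m+3) = (fun _ : ℤ => (-1:ℝ)) m := by
    intro m
    simp only [T4, add_zero]
    refine ⟨?_, ?_, ?_, ?_⟩
    · rw [(hrec m).1, Even.neg_one_zpow ⟨2*m, by ring⟩]
      rcases ha m with hm|hm <;> rw [hm] <;> ring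
    · rw [(hrec m).2.1, Odd.neg_one_zpow ⟨2*m, by ring⟩]
      rcases ha m with hm|hm <;> rw [hm] <;> ring
    · rw [(hrec m).2.2.1, Even.neg_one_zpow ⟨2*m+1, by ring⟩]
      rcases ha m with hm|hm <;> rcases hpm m with hp|hp <;> rw [hm, hp] <;> ring
    · rw [(hrec m).2.2.2, Odd.neg_one_zpow ⟨2*m+1, by ring⟩]
      rcases ha m with hm|hm <;> rcases hpm m with hp|hp <;> rw [hm, hp] <;> ring
  have h := split4 (T4_bound a ha 0 0 0) hf hT (avg_const _) (avg_const _) (avg_const _)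
    (avg_const _)
  rw [h]; ring

lemma rel_R4 (a : ℤ → ℝ) (ha : ∀ i, a i = 1 ∨ a i = -1)
    (hrec : ∀ m : ℤ, a (4 * m) = a m ∧ a (4 * m + 1) = a m ∧
      a (4 * m + 2) = (-1 : ℝ) ^ m * a m ∧ a (4 * m + 3) = -((-1 : ℝ) ^ m) * a m)
    (S : ℤ) {L K0 K1 : ℝ}
    (hT : Tendsto (avg (S4 a 1 (4*S+1) (4*S+1+1))) atTop (nhds L))
    (h0 : Tendsto (avg (T4 a 0 0 0)) atTop (nhds K0))
    (h1 : Tendsto (avg (T4 a 0 0 1)) atTop (nhds K1)) :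
    L = 0 := by
  rw [show (4*S+1+1 : ℤ) = 4*S+2 from by ring] at hT
  have hf : ∀ m, S4 a 1 (4*S+1) (4*S+2) (4*m) = (fun i => T4 a 0 0 0 (i+S)) m ∧
      S4 a 1 (4*S+1) (4*S+2) (4*m+1) = (fun i => (-1:ℝ) * T4 a 0 0 0 i) m ∧
      S4 a 1 (4*S+1) (4*S+2) (4*m+2) = (fun i => T4 a 0 0 1 (i+S)) m ∧
      S4 a 1 (4*S+1) (4*S+2) (4*m+3) = (fun i => (-1:ℝ) * T4 a 0 0 1 i) m := by
    intro m
    simp only [S4, T4, add_zero]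
    refine ⟨?_, ?_, ?_, ?_⟩
    · have e0 : (4*m+1 : ℤ) = 4*m+1 := rfl
      have e1 : (4*m+(4*S+1) : ℤ) = 4*(m+S)+1 := by ring
      have e2 : (4*m+(4*S+2) : ℤ) = 4*(m+S)+2 := by ring
      rw [e1, e2, (hrec m).1, (hrec m).2.1, (hrec (m+S)).2.1, (hrec (m+S)).2.2.1]
      rcases ha m with hm|hm <;> rcases ha (m+S) with hb|hb <;> rw [hm, hb] <;> ring
    · have e0 : (4*m+1+1 : ℤ) = 4*m+2 := by ring
      have e1 : (4*m+1+(4*S+1) : ℤ) = 4*(m+S)+2 := by ring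
      have e2 : (4*m+1+(4*S+2) : ℤ) = 4*(m+S)+3 := by ring
      rw [e0, e1, e2, (hrec m).2.1, (hrec m).2.2.1, (hrec (m+S)).2.2.1, (hrec (m+S)).2.2.2]
      rcases ha m with hm|hm <;> rcases ha (m+S) with hb|hb <;> rcases hpm (m+S) with hp|hp <;>
        rw [hm, hb, hp] <;> ring
    · have e0 : (4*m+2+1 : ℤ) = 4*m+3 := by ring
      have e1 : (4*m+2+(4*S+1) : ℤ) = 4*(m+S)+3 := by ring
      have e2 : (4*m+2+(4*S+2) : ℤ) = 4*(m+S+1) := by ring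
      rw [e0, e1, e2, (hrec m).2.2.1, (hrec m).2.2.2, (hrec (m+S)).2.2.2, (hrec (m+S+1)).1]
      rcases ha m with hm|hm <;> rcases ha (m+S) with hb|hb <;> rcases hpm m with hp|hp <;>
        rw [hm, hb, hp] <;> ring
    · have e0 : (4*m+3+1 : ℤ) = 4*(m+1) := by ring
      have e1 : (4*m+3+(4*S+1) : ℤ) = 4*(m+S+1) := by ring
      have e2 : (4*m+3+(4*S+2) : ℤ) = 4*(m+S+1)+1 := by ring
      rw [e0, e1, e2, (hrec m).2.2.2, (hrec (m+1)).1, (hrec (m+S+1)).1, (hrec (m+S+1)).2.1]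
      rcases ha m with hm|hm <;> rcases ha (m+S+1) with hb|hb <;> rw [hm, hb] <;> ring
  have hs0 := tendsto_avg_shift (T4 a 0 0 0) (T4_bound a ha 0 0 0) S h0
  have hs1 := tendsto_avg_shift (T4 a 0 0 1) (T4_bound a ha 0 0 1) S h1
  have h := split4 (S4_bound a ha 1 (4*S+1) (4*S+2)) hf hT hs0
    (tendsto_avg_const_mul (-1:ℝ) h0) hs1 (tendsto_avg_const_mul (-1:ℝ) h1)
  rw [h]; ring

lemma rel_R5 (a : ℤ → ℝ) (ha : ∀ i, a i = 1 ∨ a i = -1)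
    (hrec : ∀ m : ℤ, a (4 * m) = a m ∧ a (4 * m + 1) = a m ∧
      a (4 * m + 2) = (-1 : ℝ) ^ m * a m ∧ a (4 * m + 3) = -((-1 : ℝ) ^ m) * a m)
    (S : ℤ) {L K0 K1 : ℝ}
    (hT : Tendsto (avg (S4 a 1 (4*S+3) (4*S+3+1))) atTop (nhds L))
    (h0 : Tendsto (avg (T4 a 0 0 0)) atTop (nhds K0))
    (h1 : Tendsto (avg (T4 a 0 0 1)) atTop (nhds K1)) :
    L = K0 / 2 := by
  rw [show (4*S+3+1 : ℤ) = 4*S+4 from by ring] at hT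
  have hf : ∀ m, S4 a 1 (4*S+3) (4*S+4) (4*m) = (fun i => (-1:ℝ) * T4 a 0 0 1 (i+S)) m ∧
      S4 a 1 (4*S+3) (4*S+4) (4*m+1) = (fun i => T4 a 0 0 0 i) m ∧
      S4 a 1 (4*S+3) (4*S+4) (4*m+2) = (fun i => T4 a 0 0 0 (i+S)) m ∧
      S4 a 1 (4*S+3) (4*S+4) (4*m+3) = (fun i => T4 a 0 0 1 i) m := by
    intro m
    simp only [S4, T4, add_zero]
    refine ⟨?_, ?_, ?_, ?_⟩
    · have e1 : (4*m+(4*S+3) : ℤ) = 4*(m+S)+3 := by ring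
      have e2 : (4*m+(4*S+4) : ℤ) = 4*(m+S+1) := by ring
      rw [e1, e2, (hrec m).1, (hrec m).2.1, (hrec (m+S)).2.2.2, (hrec (m+S+1)).1]
      rcases ha m with hm|hm <;> rcases ha (m+S) with hb|hb <;> rw [hm, hb] <;> ring
    · have e0 : (4*m+1+1 : ℤ) = 4*m+2 := by ring
      have e1 : (4*m+1+(4*S+3) : ℤ) = 4*(m+S+1) := by ring
      have e2 : (4*m+1+(4*S+4) : ℤ) = 4*(m+S+1)+1 := by ring
      rw [e0, e1, e2, (hrec m).2.1, (hrec m).2.2.1, (hrec (m+S+1)).1, (hrec (m+S+1)).2.1]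
      rcases ha m with hm|hm <;> rcases ha (m+S+1) with hb|hb <;> rw [hm, hb] <;> ring
    · have e0 : (4*m+2+1 : ℤ) = 4*m+3 := by ring
      have e1 : (4*m+2+(4*S+3) : ℤ) = 4*(m+S+1)+1 := by ring
      have e2 : (4*m+2+(4*S+4) : ℤ) = 4*(m+S+1)+2 := by ring
      rw [e0, e1, e2, (hrec m).2.2.1, (hrec m).2.2.2, (hrec (m+S+1)).2.1, (hrec (m+S+1)).2.2.1,
        zadd (m+S) 1, zpow_one]
      rcases ha m with hm|hm <;> rcases ha (m+S+1) with hb|hb <;> rcases hpm m with hp|hp <;>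
        rcases ha (m+S) with hc|hc <;> rw [hm, hb, hp, hc] <;> ring
    · have e0 : (4*m+3+1 : ℤ) = 4*(m+1) := by ring
      have e1 : (4*m+3+(4*S+3) : ℤ) = 4*(m+S+1)+2 := by ring
      have e2 : (4*m+3+(4*S+4) : ℤ) = 4*(m+S+1)+3 := by ring
      rw [e0, e1, e2, (hrec m).2.2.2, (hrec (m+1)).1, (hrec (m+S+1)).2.2.1, (hrec (m+S+1)).2.2.2]
      rcases ha m with hm|hm <;> rcases ha (m+S+1) with hb|hb <;>
        rcases hpm (m+S+1) with hp|hp <;> rw [hm, hb, hp] <;> ring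
  have hs0 := tendsto_avg_shift (T4 a 0 0 0) (T4_bound a ha 0 0 0) S h0
  have hs1 := tendsto_avg_shift (T4 a 0 0 1) (T4_bound a ha 0 0 1) S h1
  have h := split4 (S4_bound a ha 1 (4*S+3) (4*S+4)) hf hT
    (tendsto_avg_const_mul (-1:ℝ) hs1) h0 hs0 h1
  rw [h]; ring

end RSaux4

open RSaux4 in
theorem rudin_shapiro_four_point_level_sets_doubled (a : ℤ → ℝ)
    (ha : ∀ i, a i = 1 ∨ a i = -1)
    (hrec : ∀ m : ℤ, a (4 * m) = a m ∧ a (4 * m + 1) = a m ∧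
      a (4 * m + 2) = (-1 : ℝ) ^ m * a m ∧ a (4 * m + 3) = -((-1 : ℝ) ^ m) * a m)
    (η θ : ℤ → ℤ → ℤ → ℝ)
    (hη : ∀ m₁ m₂ m₃ : ℤ, Tendsto (fun N : ℕ =>
        (1 / (2 * (N : ℝ) + 1)) *
          ∑ i ∈ Finset.Icc (-(N : ℤ)) (N : ℤ),
            a i * a (i + m₁) * a (i + m₂) * a (i + m₃))
      atTop (nhds (η m₁ m₂ m₃)))
    (hθ : ∀ m₁ m₂ m₃ : ℤ, Tendsto (fun N : ℕ =>
        (1 / (2 * (N : ℝ) + 1)) *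
          ∑ i ∈ Finset.Icc (-(N : ℤ)) (N : ℤ),
            (-1 : ℝ) ^ i * a i * a (i + m₁) * a (i + m₂) * a (i + m₃))
      atTop (nhds (θ m₁ m₂ m₃)))
    (n : ℕ) (hn : 1 ≤ n) (l : ℤ) :
    η 2 (2 ^ (n + 1) * (2 * l + 1)) (2 ^ (n + 1) * (2 * l + 1) + 2) = 1 - 3 / 2 ^ n := by
  obtain ⟨u, hu⟩ : ∃ u : ℤ, u = 2*l+1 := ⟨_, rfl⟩
  rw [← hu]
  have hηa : ∀ m₁ m₂ m₃ : ℤ, Tendsto (avg (S4 a m₁ m₂ m₃)) atTop (nhds (η m₁ m₂ m₃)) :=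
    fun m₁ m₂ m₃ => hη m₁ m₂ m₃
  have hθa : ∀ m₁ m₂ m₃ : ℤ, Tendsto (avg (T4 a m₁ m₂ m₃)) atTop (nhds (θ m₁ m₂ m₃)) :=
    fun m₁ m₂ m₃ => hθ m₁ m₂ m₃
  have hΘ0 : θ 0 0 0 = 0 := rel_T0 a ha hrec (hθa 0 0 0)
  have hoddeta : ∀ s : ℤ, Odd s → η 1 s (s+1) = 0 := by
    intro s hs
    obtain ⟨v, hv⟩ := hs
    rcases Int.even_or_odd v with ⟨S, hS⟩ | ⟨S, hS⟩
    · have e : s = 4*S+1 := by omega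
      have h := hηa 1 s (s+1)
      rw [e] at h ⊢
      exact rel_R4 a ha hrec S h (hθa 0 0 0) (hθa 0 0 1)
    · have e : s = 4*S+3 := by omega
      have h := hηa 1 s (s+1)
      rw [e] at h ⊢
      rw [rel_R5 a ha hrec S h (hθa 0 0 0) (hθa 0 0 1), hΘ0]
      ring
  have hE : ∀ k : ℕ, η 1 (2^k*u) (2^k*u+1) = if k = 0 then 0 else 1 - 3/(2:ℝ)^k := by
    intro k
    induction k using Nat.strong_induction_on with
    | _ k ih =>
      rcases k with _ | k
      · rw [if_pos rfl, show ((2:ℤ)^0*u : ℤ) = u from by norm_num]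
        exact hoddeta u ⟨l, hu⟩
      rcases k with _ | k
      · rw [if_neg (by omega), show ((2:ℤ)^1*u : ℤ) = 4*l+2 from by rw [hu]; ring]
        have h := hηa 1 (4*l+2) (4*l+2+1)
        rw [rel_R3 a ha hrec l h (hηa 0 0 1)]
        norm_num
      · have e : ((2:ℤ)^(k+1+1)*u : ℤ) = 4*(2^k*u) := by rw [pow_succ, pow_succ]; ring
        rw [if_neg (by omega), e]
        have h := hηa 1 (2^(k+1+1)*u) (2^(k+1+1)*u+1)
        rw [e] at h
        have hrel := rel_R2 a ha hrec (2^k*u) h (hηa 1 (2^k*u) (2^k*u+1))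
        rw [hrel, ih k (by omega)]
        rcases k with _ | i
        · rw [if_pos rfl, show ((2:ℤ)^0*u : ℤ) = u from by norm_num,
            Odd.neg_one_zpow ⟨l, hu⟩]
          norm_num
        · rw [if_neg (by omega),
            Even.neg_one_zpow ⟨2^i*u, by rw [pow_succ]; ring⟩]
          have h2 : ((2:ℝ)^(i+1)) ≠ 0 := by positivity
          rw [show ((2:ℝ)^(i+1+1+1)) = 4*2^(i+1) from by rw [pow_succ, pow_succ]; ring]
          field_simp
          ring
  obtain ⟨j, hj⟩ : ∃ j, n = j+1 := ⟨n-1, by omega⟩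
  subst hj
  have e : ((2:ℤ)^(j+1+1)*u : ℤ) = 4*(2^j*u) := by rw [pow_succ, pow_succ]; ring
  rw [e]
  have h := hηa 2 (2^(j+1+1)*u) (2^(j+1+1)*u+2)
  rw [e] at h
  have hrel := rel_R1 a ha hrec (2^j*u) h (hηa 1 (2^j*u) (2^j*u+1))
  rw [hrel, hE j]
  rcases j with _ | i
  · rw [if_pos rfl, show ((2:ℤ)^0*u : ℤ) = u from by norm_num, Odd.neg_one_zpow ⟨l, hu⟩]
    norm_num
  · rw [if_neg (by omega), Even.neg_one_zpow ⟨2^i*u, by rw [pow_succ]; ring⟩]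
    have h2 : ((2:ℝ)^(i+1)) ≠ 0 := by positivity
    rw [show ((2:ℝ)^(i+1+1)) = 2*2^(i+1) from by rw [pow_succ]; ring]
    field_simp
    ring
end

section
/- For the balanced Rudin–Shapiro sequence, for every n ≥ 1, every m ≥ 0 and every ℓ ∈ ℤ: η^{(4)}(2^m · 1, 2^m · 2^n(2ℓ+1), 2^m · (2^n(2ℓ+1)+1)) = 1 − 3/2^n; that is, η^{(4)} is constant with value 1 − 3/2^n on the set C_n = { 2^m(1, 2^n(2ℓ+1), 2^n(2ℓ+1)+1) : m ≥ 0, ℓ ∈ ℤ }. -/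
open Filter Finset

namespace RSaux

noncomputable def avg (f : ℤ → ℝ) (N : ℕ) : ℝ :=
  (1 / (2 * (N : ℝ) + 1)) * ∑ i ∈ Finset.Icc (-(N : ℤ)) (N : ℤ), f i

lemma sum_succ_top (f : ℤ → ℝ) {a b : ℤ} (h : a ≤ b + 1) :
    ∑ i ∈ Icc a (b+1), f i = (∑ i ∈ Icc a b, f i) + f (b+1) := by
  have : Icc a (b+1) = insert (b+1) (Icc a b) := by
    ext x; simp only [mem_Icc, mem_insert]; omega
  rw [this, Finset.sum_insert (by simp only [mem_Icc]; omega)]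
  ring

lemma sum_succ_bot (f : ℤ → ℝ) {a b : ℤ} (h : a ≤ b + 1) :
    ∑ i ∈ Icc (a-1) b, f i = f (a-1) + ∑ i ∈ Icc a b, f i := by
  have : Icc (a-1) b = insert (a-1) (Icc a b) := by
    ext x; simp only [mem_Icc, mem_insert]; omega
  rw [this, Finset.sum_insert (by simp only [mem_Icc]; omega)]

lemma tendsto_one_div_lin (c d : ℝ) (hc : 0 < c) :
    Tendsto (fun n : ℕ => 1/(c*n+d)) atTop (nhds 0) := by
  have h1 : Tendsto (fun n : ℕ => c*(n:ℝ)+d) atTop atTop :=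
    Filter.tendsto_atTop_add_const_right _ d
      (Filter.Tendsto.const_mul_atTop hc tendsto_natCast_atTop_atTop)
  have h2 : Tendsto (fun n : ℕ => (c*(n:ℝ)+d)⁻¹) atTop (nhds 0) := h1.inv_tendsto_atTop
  simpa only [one_div] using h2

lemma avg_congr {f g : ℤ → ℝ} (h : ∀ i, f i = g i) : avg f = avg g := by
  funext N; unfold avg; congr 1; exact Finset.sum_congr rfl (fun i _ => h i)

lemma avg_const_mul (c : ℝ) (g : ℤ → ℝ) (N : ℕ) :
    avg (fun i => c * g i) N = c * avg g N := by
  unfold avg; rw [← Finset.mul_sum]; ring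

lemma tendsto_avg_const_mul {s : ℤ → ℝ} {L : ℝ} (c : ℝ)
    (h : Tendsto (avg s) atTop (nhds L)) :
    Tendsto (avg (fun i => c * s i)) atTop (nhds (c * L)) :=
  (h.const_mul c).congr (fun N => (avg_const_mul c s N).symm)

lemma tendsto_avg_one : Tendsto (avg (fun _ => (1:ℝ))) atTop (nhds 1) := by
  have h : ∀ N : ℕ, avg (fun _ => (1:ℝ)) N = 1 := by
    intro N
    unfold avg
    rw [Finset.sum_const, Int.card_Icc]
    have h2 : (N:ℤ) + 1 - (-(N:ℤ)) = 2*N+1 := by ring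
    rw [h2]
    have h3 : ((2*(N:ℤ)+1).toNat : ℝ) = 2*(N:ℝ)+1 := by
      have : (2*(N:ℤ)+1).toNat = 2*N+1 := by omega
      rw [this]; push_cast; ring
    have h4 : (2*(N:ℝ)+1) ≠ 0 := by positivity
    simp only [nsmul_eq_mul, mul_one]
    rw [h3]
    field_simp
  exact (tendsto_const_nhds).congr (fun N => (h N).symm)

lemma tendsto_avg_sign : Tendsto (avg (fun i => (-1:ℝ)^i)) atTop (nhds 0) := by
  have hS : ∀ N : ℕ, ∑ i ∈ Icc (-(N : ℤ)) (N : ℤ), (-1:ℝ)^i = (-1:ℝ)^(N:ℕ) := by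
    intro N
    induction N with
    | zero => simp
    | succ N ih =>
      have c1 : (-(↑(N+1)) : ℤ) = (-(N:ℤ)) - 1 := by push_cast; ring
      have c2 : ((↑(N+1)) : ℤ) = (N:ℤ) + 1 := by push_cast; ring
      rw [c1, c2, sum_succ_bot _ (by omega), sum_succ_top _ (by omega), ih]
      have hv : ∀ x : ℤ, ((-1:ℝ))^(x) * ((-1:ℝ))^(x) = 1 := by
        intro x
        rw [← zpow_add₀ (by norm_num : (-1:ℝ) ≠ 0)]
        exact Even.neg_one_zpow ⟨x, by ring⟩
      have e1 : ((-1:ℝ))^((N:ℤ)+1) = (-1:ℝ)^(N:ℕ) * (-1) := by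
        rw [zpow_add₀ (by norm_num : (-1:ℝ) ≠ 0)]
        norm_num [zpow_natCast]
      have e2 : ((-1:ℝ))^(-(N:ℤ)-1) = (-1:ℝ)^(N:ℕ) * (-1) := by
        have : (-(N:ℤ)-1) = -((N:ℤ)+1) := by ring
        rw [this, zpow_neg, e1]
        rcases Nat.even_or_odd N with h|h
        · rw [h.neg_one_pow]; norm_num
        · rw [h.neg_one_pow]; norm_num
      rw [e1, e2]
      push_cast [pow_succ]
      ring
  apply squeeze_zero_norm (a := fun N : ℕ => 1/(2*(N:ℝ)+1)) ?_ (tendsto_one_div_lin 2 1 (by norm_num))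
  intro N
  unfold avg
  rw [hS N]
  have h4 : (0:ℝ) < 2*(N:ℝ)+1 := by positivity
  rcases Nat.even_or_odd N with h|h
  · rw [h.neg_one_pow, mul_one, Real.norm_eq_abs, abs_of_pos (by positivity)]
  · rw [h.neg_one_pow, mul_neg_one, Real.norm_eq_abs, abs_neg, abs_of_pos (by positivity)]

-- single shift step
lemma avg_shift_one (g : ℤ → ℝ) (C : ℝ) (hb : ∀ i, |g i| ≤ C) {L : ℝ}
    (h : Tendsto (avg g) atTop (nhds L)) :
    Tendsto (avg (fun i => g (i+1))) atTop (nhds L) := by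
  have key : ∀ N : ℕ, avg (fun i => g (i+1)) N
      = avg g N + (1/(2*(N:ℝ)+1)) * (g ((N:ℤ)+1) - g (-(N:ℤ))) := by
    intro N
    unfold avg
    have hshift : ∑ i ∈ Icc (-(N:ℤ)) N, g (i+1) = ∑ i ∈ Icc (-(N:ℤ)+1) ((N:ℤ)+1), g i := by
      rw [← Finset.map_add_right_Icc _ _ 1, Finset.sum_map]; rfl
    rw [hshift, sum_succ_top g (by omega)]
    have hbot : ∑ i ∈ Icc (-(N:ℤ)) (N:ℤ), g i = g (-(N:ℤ)) + ∑ i ∈ Icc (-(N:ℤ)+1) (N:ℤ), g i := by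
      have := sum_succ_bot g (a := -(N:ℤ)+1) (b := (N:ℤ)) (by omega)
      simpa using this
    rw [hbot]
    ring
  rw [show L = L + 0 by ring]
  apply Tendsto.congr (fun N => (key N).symm)
  apply h.add
  apply squeeze_zero_norm (a := fun N : ℕ => (1/(2*(N:ℝ)+1)) * (2*C)) ?_
  · have := (tendsto_one_div_lin 2 1 (by norm_num)).mul_const (2*C)
    simpa using this
  · intro N
    rw [Real.norm_eq_abs, abs_mul]
    have h1 : (0:ℝ) < 2*(N:ℝ)+1 := by positivity
    have h2 : |1/(2*(N:ℝ)+1)| = 1/(2*(N:ℝ)+1) := abs_of_pos (by positivity)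
    rw [h2]
    apply mul_le_mul_of_nonneg_left ?_ (by positivity)
    calc |g ((N:ℤ)+1) - g (-(N:ℤ))| ≤ |g ((N:ℤ)+1)| + |g (-(N:ℤ))| := abs_sub _ _
      _ ≤ C + C := add_le_add (hb _) (hb _)
      _ = 2*C := by ring

lemma avg_shift_neg_one (g : ℤ → ℝ) (C : ℝ) (hb : ∀ i, |g i| ≤ C) {L : ℝ}
    (h : Tendsto (avg g) atTop (nhds L)) :
    Tendsto (avg (fun i => g (i-1))) atTop (nhds L) := by
  have key : ∀ N : ℕ, avg (fun i => g (i-1)) N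
      = avg g N + (1/(2*(N:ℝ)+1)) * (g (-(N:ℤ)-1) - g ((N:ℤ))) := by
    intro N
    unfold avg
    have hshift : ∑ i ∈ Icc (-(N:ℤ)) N, g (i-1) = ∑ i ∈ Icc (-(N:ℤ)-1) ((N:ℤ)-1), g i := by
      rw [show (-(N:ℤ)-1) = (-(N:ℤ)) + -1 by ring, show ((N:ℤ)-1) = (N:ℤ) + -1 by ring,
        ← Finset.map_add_right_Icc _ _ (-1), Finset.sum_map]
      simp [sub_eq_add_neg]
    rw [hshift]
    have htop : ∑ i ∈ Icc (-(N:ℤ)) (N:ℤ), g i = (∑ i ∈ Icc (-(N:ℤ)) ((N:ℤ)-1), g i) + g (N:ℤ) := by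
      have := sum_succ_top g (a := -(N:ℤ)) (b := (N:ℤ)-1) (by omega)
      simpa using this
    have hbot : ∑ i ∈ Icc (-(N:ℤ)-1) ((N:ℤ)-1), g i = g (-(N:ℤ)-1) + ∑ i ∈ Icc (-(N:ℤ)) ((N:ℤ)-1), g i := by
      have := sum_succ_bot g (a := -(N:ℤ)) (b := (N:ℤ)-1) (by omega)
      simpa using this
    rw [htop, hbot]
    ring
  rw [show L = L + 0 by ring]
  apply Tendsto.congr (fun N => (key N).symm)
  apply h.add
  apply squeeze_zero_norm (a := fun N : ℕ => (1/(2*(N:ℝ)+1)) * (2*C)) ?_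
  · have := (tendsto_one_div_lin 2 1 (by norm_num)).mul_const (2*C)
    simpa using this
  · intro N
    rw [Real.norm_eq_abs, abs_mul]
    have h2 : |1/(2*(N:ℝ)+1)| = 1/(2*(N:ℝ)+1) := abs_of_pos (by positivity)
    rw [h2]
    apply mul_le_mul_of_nonneg_left ?_ (by positivity)
    calc |g (-(N:ℤ)-1) - g ((N:ℤ))| ≤ |g (-(N:ℤ)-1)| + |g ((N:ℤ))| := abs_sub _ _
      _ ≤ C + C := add_le_add (hb _) (hb _)
      _ = 2*C := by ring

lemma avg_shift (f : ℤ → ℝ) (C : ℝ) (hb : ∀ i, |f i| ≤ C) (c : ℤ) {L : ℝ}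
    (h : Tendsto (avg f) atTop (nhds L)) :
    Tendsto (avg (fun i => f (i+c))) atTop (nhds L) := by
  induction c using Int.induction_on with
  | zero => simpa using h
  | succ k ih =>
    have := avg_shift_one (fun i => f (i+k)) C (fun i => hb _) ih
    have he : (fun i : ℤ => (fun i => f (i + (k:ℤ))) (i + 1)) = (fun i : ℤ => f (i + ((k:ℤ)+1))) := by
      funext i; show f (i + 1 + (k:ℤ)) = f (i + ((k:ℤ)+1)); congr 1; ring
    rw [he] at this
    exact this
  | pred k ih =>
    have := avg_shift_neg_one (fun i => f (i + -(k:ℤ))) C (fun i => hb _) ih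
    have he : (fun i : ℤ => (fun i => f (i + -(k:ℤ))) (i - 1)) = (fun i : ℤ => f (i + (-(k:ℤ)-1))) := by
      funext i; show f (i - 1 + -(k:ℤ)) = f (i + (-(k:ℤ)-1)); congr 1; ring
    rw [he] at this
    exact this


lemma sum_four (F : ℤ → ℝ) (d : ℕ) (a : ℤ) :
    ∑ i ∈ Icc (4*a) (4*(a + (d:ℤ)) + 3), F i
      = ∑ j ∈ Icc a (a + (d:ℤ)), (F (4*j) + F (4*j+1) + F (4*j+2) + F (4*j+3)) := by
  induction d with
  | zero =>
    simp only [Nat.cast_zero, add_zero]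
    rw [show (4*a+3) = (4*a+2)+1 by ring, sum_succ_top F (by omega),
      show (4*a+2) = (4*a+1)+1 by ring, sum_succ_top F (by omega),
      show (4*a+1) = (4*a)+1 by ring, sum_succ_top F (by omega)]
    rw [Finset.Icc_self, Finset.Icc_self, Finset.sum_singleton, Finset.sum_singleton]
    ring
  | succ d ih =>
    have c1 : a + ((d:ℤ)+1) = (a + (d:ℤ)) + 1 := by ring
    push_cast
    rw [c1]
    rw [show (4*((a + (d:ℤ)) + 1) + 3) = (4*(a+(d:ℤ)) + 6) + 1 by ring, sum_succ_top F (by omega),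
      show (4*(a+(d:ℤ)) + 6) = (4*(a+(d:ℤ)) + 5) + 1 by ring, sum_succ_top F (by omega),
      show (4*(a+(d:ℤ)) + 5) = (4*(a+(d:ℤ)) + 4) + 1 by ring, sum_succ_top F (by omega),
      show (4*(a+(d:ℤ)) + 4) = (4*(a+(d:ℤ)) + 3) + 1 by ring, sum_succ_top F (by omega)]
    rw [sum_succ_top _ (by omega), ih]
    ring_nf

lemma quarter (F G0 G1 G2 G3 : ℤ → ℝ) (C : ℝ) (hb : ∀ i, |F i| ≤ C)
    (h0 : ∀ j, F (4*j) = G0 j) (h1 : ∀ j, F (4*j+1) = G1 j)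
    (h2 : ∀ j, F (4*j+2) = G2 j) (h3 : ∀ j, F (4*j+3) = G3 j)
    {L L0 L1 L2 L3 : ℝ}
    (hF : Tendsto (avg F) atTop (nhds L))
    (t0 : Tendsto (avg G0) atTop (nhds L0))
    (t1 : Tendsto (avg G1) atTop (nhds L1))
    (t2 : Tendsto (avg G2) atTop (nhds L2))
    (t3 : Tendsto (avg G3) atTop (nhds L3)) :
    L = (L0 + L1 + L2 + L3)/4 := by
  -- key identity
  have key : ∀ M : ℕ, avg F (4*M+3)
      = ((2*(M:ℝ)+3)/(8*(M:ℝ)+7)) * (avg G0 (M+1) + avg G1 (M+1) + avg G2 (M+1) + avg G3 (M+1))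
        - (1/(8*(M:ℝ)+7)) * (G0 ((M:ℤ)+1) + G1 ((M:ℤ)+1) + G2 ((M:ℤ)+1) + G3 ((M:ℤ)+1)
            + F (-(4*(M:ℤ)+4))) := by
    intro M
    have e4 := sum_four F (2*M+1) (-(M:ℤ)-1)
    rw [show (-(M:ℤ)-1) + ((2*M+1:ℕ):ℤ) = (M:ℤ) by push_cast; ring] at e4
    rw [show (4*(-(M:ℤ)-1)) = (-(4*(M:ℤ)+3)) - 1 by ring] at e4
    rw [sum_succ_bot F (a := -(4*(M:ℤ)+3)) (b := 4*(M:ℤ)+3) (by omega)] at e4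
    rw [show (-(4*(M:ℤ)+3) - 1) = -(4*(M:ℤ)+4) by ring] at e4
    -- split RHS sum
    have esplit : ∑ j ∈ Icc (-(M:ℤ)-1) (M:ℤ), (F (4*j) + F (4*j+1) + F (4*j+2) + F (4*j+3))
        = (∑ j ∈ Icc (-(M:ℤ)-1) (M:ℤ), G0 j) + (∑ j ∈ Icc (-(M:ℤ)-1) (M:ℤ), G1 j)
          + (∑ j ∈ Icc (-(M:ℤ)-1) (M:ℤ), G2 j) + (∑ j ∈ Icc (-(M:ℤ)-1) (M:ℤ), G3 j) := by
      rw [← Finset.sum_add_distrib, ← Finset.sum_add_distrib, ← Finset.sum_add_distrib]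
      exact Finset.sum_congr rfl (fun j _ => by rw [h0, h1, h2, h3])
    rw [esplit] at e4
    -- top-extend each G sum
    have etop : ∀ g : ℤ → ℝ, ∑ j ∈ Icc (-(M:ℤ)-1) (M:ℤ), g j
        = (∑ j ∈ Icc (-(M:ℤ)-1) ((M:ℤ)+1), g j) - g ((M:ℤ)+1) := by
      intro g
      rw [sum_succ_top g (a := -(M:ℤ)-1) (b := (M:ℤ)) (by omega)]
      ring
    rw [etop G0, etop G1, etop G2, etop G3] at e4
    have e5 : ∑ i ∈ Icc (-(4*(M:ℤ)+3)) (4*(M:ℤ)+3), F i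
        = ((∑ j ∈ Icc (-(M:ℤ)-1) ((M:ℤ)+1), G0 j) - G0 ((M:ℤ)+1))
          + ((∑ j ∈ Icc (-(M:ℤ)-1) ((M:ℤ)+1), G1 j) - G1 ((M:ℤ)+1))
          + ((∑ j ∈ Icc (-(M:ℤ)-1) ((M:ℤ)+1), G2 j) - G2 ((M:ℤ)+1))
          + ((∑ j ∈ Icc (-(M:ℤ)-1) ((M:ℤ)+1), G3 j) - G3 ((M:ℤ)+1))
          - F (-(4*(M:ℤ)+4)) := by linarith [e4]
    -- now express avg's
    unfold avg
    have c1 : (((4*M+3:ℕ)):ℝ) = 4*(M:ℝ)+3 := by push_cast; ring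
    have c2 : (((M+1:ℕ)):ℝ) = (M:ℝ)+1 := by push_cast; ring
    have c3 : (-((4*M+3:ℕ):ℤ)) = -(4*(M:ℤ)+3) := by push_cast; ring
    have c4 : (((4*M+3:ℕ)):ℤ) = 4*(M:ℤ)+3 := by push_cast; ring
    have c5 : (-((M+1:ℕ):ℤ)) = -(M:ℤ)-1 := by push_cast; ring
    have c6 : (((M+1:ℕ)):ℤ) = (M:ℤ)+1 := by push_cast; ring
    rw [c1, c2, c3, c4, c5, c6, e5]
    have d1 : (2*(4*(M:ℝ)+3)+1) ≠ 0 := by positivity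
    have d2 : (2*((M:ℝ)+1)+1) ≠ 0 := by positivity
    have d3 : (8*(M:ℝ)+7) ≠ 0 := by positivity
    field_simp
    ring
  -- limits
  have hsub : Tendsto (fun M : ℕ => avg F (4*M+3)) atTop (nhds L) := by
    apply hF.comp
    apply Filter.tendsto_atTop_atTop.mpr
    exact fun b => ⟨b, fun c hc => by omega⟩
  have hM1 : Tendsto (fun M : ℕ => M+1) atTop atTop :=
    Filter.tendsto_atTop_atTop.mpr (fun b => ⟨b, fun c hc => by omega⟩)
  have hq : Tendsto (fun M : ℕ => ((2*(M:ℝ)+3)/(8*(M:ℝ)+7))) atTop (nhds (1/4)) := by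
    have h0 : Tendsto (fun M : ℕ => 1/4 + (5/4)*(1/(8*(M:ℝ)+7))) atTop (nhds (1/4 + (5/4)*0)) :=
      tendsto_const_nhds.add ((tendsto_one_div_lin 8 7 (by norm_num)).const_mul (5/4))
    rw [show (1/4 + (5/4)*0 : ℝ) = 1/4 by ring] at h0
    apply h0.congr
    intro M
    have d3 : (8*(M:ℝ)+7) ≠ 0 := by positivity
    field_simp
    ring
  have herr : Tendsto (fun M : ℕ => (1/(8*(M:ℝ)+7)) * (G0 ((M:ℤ)+1) + G1 ((M:ℤ)+1)
      + G2 ((M:ℤ)+1) + G3 ((M:ℤ)+1) + F (-(4*(M:ℤ)+4)))) atTop (nhds 0) := by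
    apply squeeze_zero_norm (a := fun M : ℕ => (1/(8*(M:ℝ)+7)) * (5*C)) ?_
    · simpa using (tendsto_one_div_lin 8 7 (by norm_num)).mul_const (5*C)
    · intro M
      rw [Real.norm_eq_abs, abs_mul, abs_of_pos (show (0:ℝ) < 1/(8*(M:ℝ)+7) by positivity)]
      apply mul_le_mul_of_nonneg_left ?_ (by positivity)
      have b0 : |G0 ((M:ℤ)+1)| ≤ C := by rw [← h0]; exact hb _
      have b1 : |G1 ((M:ℤ)+1)| ≤ C := by rw [← h1]; exact hb _
      have b2 : |G2 ((M:ℤ)+1)| ≤ C := by rw [← h2]; exact hb _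
      have b3 : |G3 ((M:ℤ)+1)| ≤ C := by rw [← h3]; exact hb _
      have b4 : |F (-(4*(M:ℤ)+4))| ≤ C := hb _
      calc |G0 ((M:ℤ)+1) + G1 ((M:ℤ)+1) + G2 ((M:ℤ)+1) + G3 ((M:ℤ)+1) + F (-(4*(M:ℤ)+4))|
          ≤ |G0 ((M:ℤ)+1) + G1 ((M:ℤ)+1) + G2 ((M:ℤ)+1) + G3 ((M:ℤ)+1)| + |F (-(4*(M:ℤ)+4))| := abs_add_le _ _
        _ ≤ (|G0 ((M:ℤ)+1) + G1 ((M:ℤ)+1) + G2 ((M:ℤ)+1)| + |G3 ((M:ℤ)+1)|) + |F (-(4*(M:ℤ)+4))| := by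
            gcongr; exact abs_add_le _ _
        _ ≤ ((|G0 ((M:ℤ)+1) + G1 ((M:ℤ)+1)| + |G2 ((M:ℤ)+1)|) + |G3 ((M:ℤ)+1)|) + |F (-(4*(M:ℤ)+4))| := by
            gcongr; exact abs_add_le _ _
        _ ≤ (((|G0 ((M:ℤ)+1)| + |G1 ((M:ℤ)+1)|) + |G2 ((M:ℤ)+1)|) + |G3 ((M:ℤ)+1)|) + |F (-(4*(M:ℤ)+4))| := by
            gcongr; exact abs_add_le _ _
        _ ≤ 5*C := by linarith
  have hrhs : Tendsto (fun M : ℕ => ((2*(M:ℝ)+3)/(8*(M:ℝ)+7))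
      * (avg G0 (M+1) + avg G1 (M+1) + avg G2 (M+1) + avg G3 (M+1))
      - (1/(8*(M:ℝ)+7)) * (G0 ((M:ℤ)+1) + G1 ((M:ℤ)+1) + G2 ((M:ℤ)+1) + G3 ((M:ℤ)+1)
          + F (-(4*(M:ℤ)+4)))) atTop (nhds ((1/4) * (L0+L1+L2+L3) - 0)) := by
    apply Tendsto.sub ?_ herr
    apply hq.mul
    exact Tendsto.add (Tendsto.add (Tendsto.add ((t0.comp hM1)) (t1.comp hM1)) (t2.comp hM1)) (t3.comp hM1)
  have := tendsto_nhds_unique (hsub.congr key) hrhs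
  rw [this]; ring


end RSaux



open RSaux

noncomputable def Ssum (a : ℤ → ℝ) (m1 m2 m3 : ℤ) : ℤ → ℝ :=
  fun i => a i * a (i+m1) * a (i+m2) * a (i+m3)
noncomputable def Tsum (a : ℤ → ℝ) (m1 m2 m3 : ℤ) : ℤ → ℝ :=
  fun i => (-1:ℝ)^i * a i * a (i+m1) * a (i+m2) * a (i+m3)

theorem rudin_shapiro_four_point_constant_on_Cn (a : ℤ → ℝ)
    (ha : ∀ i, a i = 1 ∨ a i = -1)
    (hrec : ∀ m : ℤ, a (4 * m) = a m ∧ a (4 * m + 1) = a m ∧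
      a (4 * m + 2) = (-1 : ℝ) ^ m * a m ∧ a (4 * m + 3) = -((-1 : ℝ) ^ m) * a m)
    (η θ : ℤ → ℤ → ℤ → ℝ)
    (hη : ∀ m₁ m₂ m₃ : ℤ, Tendsto (fun N : ℕ =>
        (1 / (2 * (N : ℝ) + 1)) *
          ∑ i ∈ Finset.Icc (-(N : ℤ)) (N : ℤ),
            a i * a (i + m₁) * a (i + m₂) * a (i + m₃))
      atTop (nhds (η m₁ m₂ m₃)))
    (hθ : ∀ m₁ m₂ m₃ : ℤ, Tendsto (fun N : ℕ =>
        (1 / (2 * (N : ℝ) + 1)) *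
          ∑ i ∈ Finset.Icc (-(N : ℤ)) (N : ℤ),
            (-1 : ℝ) ^ i * a i * a (i + m₁) * a (i + m₂) * a (i + m₃))
      atTop (nhds (θ m₁ m₂ m₃)))
    (n : ℕ) (hn : 1 ≤ n) (m : ℕ) (l : ℤ) :
    η (2 ^ m * 1) (2 ^ m * (2 ^ n * (2 * l + 1))) (2 ^ m * (2 ^ n * (2 * l + 1) + 1)) =
      1 - 3 / 2 ^ n := by
  have hne : (-1:ℝ) ≠ 0 := by norm_num
  have hzadd : ∀ x y : ℤ, (-1:ℝ)^(x+y) = (-1:ℝ)^x * (-1:ℝ)^y := fun x y => zpow_add₀ hne x y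
  have hsq : ∀ x : ℤ, (-1:ℝ)^x * (-1:ℝ)^x = 1 := by
    intro x; rw [← hzadd]; exact Even.neg_one_zpow ⟨x, by ring⟩
  have s4 : ∀ j : ℤ, (-1:ℝ)^(4*j) = 1 := by
    intro j; rw [zpow_mul]; norm_num
  have s41 : ∀ j : ℤ, (-1:ℝ)^(4*j+1) = -1 := by
    intro j; rw [hzadd, s4]; norm_num
  have s42 : ∀ j : ℤ, (-1:ℝ)^(4*j+2) = 1 := by
    intro j; rw [show (4*j+2:ℤ) = (4*j+1)+1 by ring, hzadd, s41]; norm_num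
  have s43 : ∀ j : ℤ, (-1:ℝ)^(4*j+3) = -1 := by
    intro j; rw [show (4*j+3:ℤ) = (4*j+2)+1 by ring, hzadd, s42]; norm_num
  have spow2 : ∀ x : ℤ, ((-1:ℝ)^x)^2 = 1 := fun x => by rw [sq, hsq]
  have spow3 : ∀ x : ℤ, ((-1:ℝ)^x)^3 = (-1:ℝ)^x := fun x => by
    rw [pow_succ, spow2, one_mul]
  have spow4 : ∀ x : ℤ, ((-1:ℝ)^x)^4 = 1 := fun x => by
    rw [pow_succ, spow3, hsq]
  have haa : ∀ x : ℤ, a x * a x = 1 := fun x => by rcases ha x with h|h <;> rw [h] <;> norm_num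
  have apow2 : ∀ x : ℤ, (a x)^2 = 1 := fun x => by rw [sq, haa]
  have apow3 : ∀ x : ℤ, (a x)^3 = a x := fun x => by rw [pow_succ, apow2, one_mul]
  have apow4 : ∀ x : ℤ, (a x)^4 = 1 := fun x => by rw [pow_succ, apow3, haa]
  have habs : ∀ x : ℤ, |a x| = 1 := fun x => by rcases ha x with h|h <;> rw [h] <;> norm_num
  have hsabs : ∀ x : ℤ, |(-1:ℝ)^x| = 1 := fun x => by
    rcases Int.even_or_odd x with h|h
    · rw [h.neg_one_zpow]; norm_num
    · rw [h.neg_one_zpow]; norm_num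
  have hbS : ∀ m1 m2 m3 i : ℤ, |Ssum a m1 m2 m3 i| ≤ 1 := by
    intro m1 m2 m3 i
    simp only [Ssum, abs_mul, habs]
    norm_num
  have hbT : ∀ m1 m2 m3 i : ℤ, |Tsum a m1 m2 m3 i| ≤ 1 := by
    intro m1 m2 m3 i
    simp only [Tsum, abs_mul, habs, hsabs]
    norm_num
  have Hη : ∀ m1 m2 m3 : ℤ, Tendsto (avg (Ssum a m1 m2 m3)) atTop (nhds (η m1 m2 m3)) := hη
  have Hθ : ∀ m1 m2 m3 : ℤ, Tendsto (avg (Tsum a m1 m2 m3)) atTop (nhds (θ m1 m2 m3)) := hθ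
  -- η 0 0 0 = 1
  have Eone : η 0 0 0 = 1 := by
    refine tendsto_nhds_unique (Hη 0 0 0) ?_
    have e : avg (Ssum a 0 0 0) = avg (fun _ => (1:ℝ)) := by
      apply avg_congr; intro i
      simp only [Ssum, add_zero]
      rcases ha i with h|h <;> rw [h] <;> norm_num
    rw [e]; exact tendsto_avg_one
  -- θ 0 0 0 = 0
  have Tzero : θ 0 0 0 = 0 := by
    refine tendsto_nhds_unique (Hθ 0 0 0) ?_
    have e : avg (Tsum a 0 0 0) = avg (fun i => (-1:ℝ)^i) := by
      apply avg_congr; intro i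
      simp only [Tsum, add_zero]
      rcases ha i with h|h <;> rw [h] <;> norm_num
    rw [e]; exact tendsto_avg_sign
  -- τ = θ 0 0 1 = 0
  have Ttau : θ 0 0 1 = 0 := by
    have key := quarter (Tsum a 0 0 1)
      (fun j => 1 * Ssum a 0 0 0 j) (fun j => -1 * Tsum a 0 0 0 j)
      (fun j => -1 * Ssum a 0 0 0 j) (fun j => 1 * Tsum a 0 0 1 j)
      1 (hbT 0 0 1)
      (by
        intro j
        obtain ⟨p0, p1, p2, p3⟩ := hrec j
        simp only [Tsum, Ssum, add_zero]
        rw [show 4*j+(1:ℤ) = 4*j+1 by ring, s4, p0, p1]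
        ring)
      (by
        intro j
        obtain ⟨p0, p1, p2, p3⟩ := hrec j
        simp only [Tsum, Ssum, add_zero]
        rw [show 4*j+1+(1:ℤ) = 4*j+2 by ring, s41, p1, p2]
        ring)
      (by
        intro j
        obtain ⟨p0, p1, p2, p3⟩ := hrec j
        simp only [Tsum, Ssum, add_zero]
        rw [show 4*j+2+(1:ℤ) = 4*j+3 by ring, s42, p2, p3]
        ring_nf
        simp [spow2, spow3, spow4, apow2, apow3, apow4])
      (by
        intro j
        obtain ⟨p0, p1, p2, p3⟩ := hrec j
        obtain ⟨q0, q1, q2, q3⟩ := hrec (j+1)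
        simp only [Tsum, Ssum, add_zero]
        rw [show 4*j+3+(1:ℤ) = 4*(j+1) by ring, s43, p3, q0]
        ring_nf
        simp [spow2, spow3, spow4, apow2, apow3, apow4])
      (hθ 0 0 1)
      (tendsto_avg_const_mul 1 (Hη 0 0 0))
      (tendsto_avg_const_mul (-1) (Hθ 0 0 0))
      (tendsto_avg_const_mul (-1) (Hη 0 0 0))
      (tendsto_avg_const_mul 1 (Hθ 0 0 1))
    rw [Eone, Tzero] at key
    linarith
  -- γ = η 0 0 1 = 0
  have Tgam : η 0 0 1 = 0 := by
    have key := quarter (Ssum a 0 0 1)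
      (fun j => 1 * Ssum a 0 0 0 j) (fun j => 1 * Tsum a 0 0 0 j)
      (fun j => -1 * Ssum a 0 0 0 j) (fun j => -1 * Tsum a 0 0 1 j)
      1 (hbS 0 0 1)
      (by
        intro j
        obtain ⟨p0, p1, p2, p3⟩ := hrec j
        simp only [Ssum, Tsum, add_zero]
        rw [show 4*j+(1:ℤ) = 4*j+1 by ring, p0, p1]
        ring)
      (by
        intro j
        obtain ⟨p0, p1, p2, p3⟩ := hrec j
        simp only [Ssum, Tsum, add_zero]
        rw [show 4*j+1+(1:ℤ) = 4*j+2 by ring, p1, p2]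
        ring)
      (by
        intro j
        obtain ⟨p0, p1, p2, p3⟩ := hrec j
        simp only [Ssum, Tsum, add_zero]
        rw [show 4*j+2+(1:ℤ) = 4*j+3 by ring, p2, p3]
        ring_nf
        simp only [spow2, spow3, spow4, apow2, apow3, apow4, hsq, haa, one_mul, mul_one, neg_mul, mul_neg, neg_neg]
        try ring)
      (by
        intro j
        obtain ⟨p0, p1, p2, p3⟩ := hrec j
        obtain ⟨q0, q1, q2, q3⟩ := hrec (j+1)
        simp only [Ssum, Tsum, add_zero]
        rw [show 4*j+3+(1:ℤ) = 4*(j+1) by ring, p3, q0]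
        try simp only [hzadd]
        try ring_nf
        try simp only [spow2, spow3, spow4, apow2, apow3, apow4, hsq, haa, one_mul, mul_one, neg_mul, mul_neg, neg_neg]
        try ring)
      (hη 0 0 1)
      (tendsto_avg_const_mul 1 (Hη 0 0 0))
      (tendsto_avg_const_mul 1 (Hθ 0 0 0))
      (tendsto_avg_const_mul (-1) (Hη 0 0 0))
      (tendsto_avg_const_mul (-1) (Hθ 0 0 1))
    rw [Eone, Tzero, Ttau] at key
    rw [key]; ring
  -- shifted 2-point correlations
  have Pgam : ∀ c : ℤ, η 0 c (c+1) = 0 := by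
    intro c
    refine tendsto_nhds_unique (Hη 0 c (c+1)) ?_
    have base : Tendsto (avg (Ssum a 0 0 1)) atTop (nhds 0) := Tgam ▸ Hη 0 0 1
    have sh := avg_shift (Ssum a 0 0 1) 1 (hbS 0 0 1) c base
    have e : avg (fun i => Ssum a 0 0 1 (i+c)) = avg (Ssum a 0 c (c+1)) := by
      apply avg_congr; intro i
      simp only [Ssum, add_zero]
      rw [show i+(c+1) = (i+c)+1 by ring]
      try simp only [hzadd]
      try ring_nf
      try simp only [spow2, spow3, spow4, apow2, apow3, apow4, hsq, haa, one_mul, mul_one, neg_mul, mul_neg, neg_neg]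
      try ring
    rw [e] at sh
    exact sh
  have Ptau : ∀ c : ℤ, θ 0 c (c+1) = 0 := by
    intro c
    refine tendsto_nhds_unique (Hθ 0 c (c+1)) ?_
    have base : Tendsto (avg (Tsum a 0 0 1)) atTop (nhds 0) := Ttau ▸ Hθ 0 0 1
    have sh := avg_shift (Tsum a 0 0 1) 1 (hbT 0 0 1) c base
    have sh2 := tendsto_avg_const_mul ((-1:ℝ)^c) sh
    rw [mul_zero] at sh2
    have e : avg (fun i => (-1:ℝ)^c * Tsum a 0 0 1 (i+c)) = avg (Tsum a 0 c (c+1)) := by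
      apply avg_congr; intro i
      simp only [Tsum, add_zero]
      rw [show i+(c+1) = (i+c)+1 by ring]
      try simp only [hzadd]
      try ring_nf
      try simp only [spow2, spow3, spow4, apow2, apow3, apow4, hsq, haa, one_mul, mul_one, neg_mul, mul_neg, neg_neg]
      try ring
    rw [e] at sh2
    exact sh2
  have Pthcc : ∀ c : ℤ, θ 0 c c = 0 := by
    intro c
    refine tendsto_nhds_unique (Hθ 0 c c) ?_
    have e : avg (Tsum a 0 c c) = avg (Tsum a 0 0 0) := by
      apply avg_congr; intro i
      simp only [Tsum, add_zero]
      try simp only [hzadd]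
      try ring_nf
      try simp only [spow2, spow3, spow4, apow2, apow3, apow4, hsq, haa, one_mul, mul_one, neg_mul, mul_neg, neg_neg]
      try ring
    rw [e]
    exact Tzero ▸ Hθ 0 0 0
  have Pth1cc : ∀ c : ℤ, θ 1 c c = 0 := by
    intro c
    refine tendsto_nhds_unique (Hθ 1 c c) ?_
    have e : avg (Tsum a 1 c c) = avg (Tsum a 0 0 1) := by
      apply avg_congr; intro i
      simp only [Tsum, add_zero]
      try simp only [hzadd]
      try ring_nf
      try simp only [spow2, spow3, spow4, apow2, apow3, apow4, hsq, haa, one_mul, mul_one, neg_mul, mul_neg, neg_neg]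
      try ring
    rw [e]
    exact Ttau ▸ Hθ 0 0 1
  have Peta0cc : ∀ c : ℤ, η 0 c c = 1 := by
    intro c
    refine tendsto_nhds_unique (Hη 0 c c) ?_
    have e : avg (Ssum a 0 c c) = avg (Ssum a 0 0 0) := by
      apply avg_congr; intro i
      simp only [Ssum, add_zero]
      try simp only [hzadd]
      try ring_nf
      try simp only [spow2, spow3, spow4, apow2, apow3, apow4, hsq, haa, one_mul, mul_one, neg_mul, mul_neg, neg_neg]
      try ring
    rw [e]
    exact Eone ▸ Hη 0 0 0
  have Peta1cc : ∀ c : ℤ, η 1 c c = 0 := by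
    intro c
    refine tendsto_nhds_unique (Hη 1 c c) ?_
    have e : avg (Ssum a 1 c c) = avg (Ssum a 0 0 1) := by
      apply avg_congr; intro i
      simp only [Ssum, add_zero]
      try simp only [hzadd]
      try ring_nf
      try simp only [spow2, spow3, spow4, apow2, apow3, apow4, hsq, haa, one_mul, mul_one, neg_mul, mul_neg, neg_neg]
      try ring
    rw [e]
    exact Tgam ▸ Hη 0 0 1
  have Qodd1 : ∀ v : ℤ, η 1 (4*v+1) (4*v+2) = 0 := by
    intro v
    have key := quarter (Ssum a 1 (4*v+1) (4*v+2))
      (fun j => (-1:ℝ)^v * Tsum a 0 0 0 j) (fun j => (-1:ℝ) * Tsum a 0 0 0 j)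
      (fun j => (-1:ℝ)^v * Tsum a 0 v (v+1) j) (fun j => (-1:ℝ) * Tsum a 1 (v+1) (v+1) j)
      1 (hbS 1 (4*v+1) (4*v+2))
      (by
        intro j
        obtain ⟨p0, p1, p2, p3⟩ := hrec (j)
        obtain ⟨q0, q1, q2, q3⟩ := hrec (j+v)
        simp only [Ssum, Tsum, add_zero]
        rw [show 4*j+(4*v+1) = 4*(j+v)+1 by ring, show 4*j+(4*v+2) = 4*(j+v)+2 by ring, p0, p1, q1, q2]
        try simp only [hzadd]
        try ring_nf
        try simp only [zpow_one, spow2, spow3, spow4, apow2, apow3, apow4, hsq, haa, one_mul, mul_one, neg_mul, mul_neg, neg_neg]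
        try ring)
      (by
        intro j
        obtain ⟨p0, p1, p2, p3⟩ := hrec (j)
        obtain ⟨q0, q1, q2, q3⟩ := hrec (j+v)
        simp only [Ssum, Tsum, add_zero]
        rw [show 4*j+1+1 = 4*j+2 by ring, show 4*j+1+(4*v+1) = 4*(j+v)+2 by ring, show 4*j+1+(4*v+2) = 4*(j+v)+3 by ring, p1, p2, q2, q3]
        try simp only [hzadd]
        try ring_nf
        try simp only [zpow_one, spow2, spow3, spow4, apow2, apow3, apow4, hsq, haa, one_mul, mul_one, neg_mul, mul_neg, neg_neg]
        try ring)
      (by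
        intro j
        obtain ⟨p0, p1, p2, p3⟩ := hrec (j)
        obtain ⟨q0, q1, q2, q3⟩ := hrec (j+v)
        obtain ⟨r0, r1, r2, r3⟩ := hrec (j+v+1)
        simp only [Ssum, Tsum, add_zero]
        rw [show 4*j+2+1 = 4*j+3 by ring, show 4*j+2+(4*v+1) = 4*(j+v)+3 by ring, show 4*j+2+(4*v+2) = 4*(j+v+1) by ring, p2, p3, q3, r0]
        try simp only [hzadd]
        try ring_nf
        try simp only [zpow_one, spow2, spow3, spow4, apow2, apow3, apow4, hsq, haa, one_mul, mul_one, neg_mul, mul_neg, neg_neg]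
        try ring)
      (by
        intro j
        obtain ⟨p0, p1, p2, p3⟩ := hrec (j)
        obtain ⟨q0, q1, q2, q3⟩ := hrec (j+1)
        obtain ⟨r0, r1, r2, r3⟩ := hrec (j+v+1)
        simp only [Ssum, Tsum, add_zero]
        rw [show 4*j+3+1 = 4*(j+1) by ring, show 4*j+3+(4*v+1) = 4*(j+v+1) by ring, show 4*j+3+(4*v+2) = 4*(j+v+1)+1 by ring, p3, q0, r0, r1]
        try simp only [hzadd]
        try ring_nf
        try simp only [zpow_one, spow2, spow3, spow4, apow2, apow3, apow4, hsq, haa, one_mul, mul_one, neg_mul, mul_neg, neg_neg]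
        try ring)
      (Hη 1 (4*v+1) (4*v+2))
      (tendsto_avg_const_mul ((-1:ℝ)^v) (Hθ 0 0 0))
      (tendsto_avg_const_mul (-1:ℝ) (Hθ 0 0 0))
      (tendsto_avg_const_mul ((-1:ℝ)^v) (Hθ 0 v (v+1)))
      (tendsto_avg_const_mul (-1:ℝ) (Hθ 1 (v+1) (v+1)))
    rw [Tzero, Ptau v, Pth1cc (v+1)] at key
    rw [key]; ring
  have Qodd3 : ∀ v : ℤ, η 1 (4*v+3) (4*v+4) = 0 := by
    intro v
    have key := quarter (Ssum a 1 (4*v+3) (4*v+4))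
      (fun j => (-1:ℝ)^(v+1) * Tsum a 0 v (v+1) j) (fun j => (1:ℝ) * Tsum a 0 (v+1) (v+1) j)
      (fun j => (-1:ℝ)^v * Tsum a 0 (v+1) (v+1) j) (fun j => (1:ℝ) * Tsum a 1 (v+1) (v+1) j)
      1 (hbS 1 (4*v+3) (4*v+4))
      (by
        intro j
        obtain ⟨p0, p1, p2, p3⟩ := hrec (j)
        obtain ⟨q0, q1, q2, q3⟩ := hrec (j+v)
        obtain ⟨r0, r1, r2, r3⟩ := hrec (j+v+1)
        simp only [Ssum, Tsum, add_zero]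
        rw [show 4*j+(4*v+3) = 4*(j+v)+3 by ring, show 4*j+(4*v+4) = 4*(j+v+1) by ring, p0, p1, q3, r0]
        try simp only [hzadd]
        try ring_nf
        try simp only [zpow_one, spow2, spow3, spow4, apow2, apow3, apow4, hsq, haa, one_mul, mul_one, neg_mul, mul_neg, neg_neg]
        try ring)
      (by
        intro j
        obtain ⟨p0, p1, p2, p3⟩ := hrec (j)
        obtain ⟨r0, r1, r2, r3⟩ := hrec (j+v+1)
        simp only [Ssum, Tsum, add_zero]
        rw [show 4*j+1+1 = 4*j+2 by ring, show 4*j+1+(4*v+3) = 4*(j+v+1) by ring, show 4*j+1+(4*v+4) = 4*(j+v+1)+1 by ring, p1, p2, r0, r1]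
        try simp only [hzadd]
        try ring_nf
        try simp only [zpow_one, spow2, spow3, spow4, apow2, apow3, apow4, hsq, haa, one_mul, mul_one, neg_mul, mul_neg, neg_neg]
        try ring)
      (by
        intro j
        obtain ⟨p0, p1, p2, p3⟩ := hrec (j)
        obtain ⟨r0, r1, r2, r3⟩ := hrec (j+v+1)
        simp only [Ssum, Tsum, add_zero]
        rw [show 4*j+2+1 = 4*j+3 by ring, show 4*j+2+(4*v+3) = 4*(j+v+1)+1 by ring, show 4*j+2+(4*v+4) = 4*(j+v+1)+2 by ring, p2, p3, r1, r2]
        try simp only [hzadd]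
        try ring_nf
        try simp only [zpow_one, spow2, spow3, spow4, apow2, apow3, apow4, hsq, haa, one_mul, mul_one, neg_mul, mul_neg, neg_neg]
        try ring)
      (by
        intro j
        obtain ⟨p0, p1, p2, p3⟩ := hrec (j)
        obtain ⟨q0, q1, q2, q3⟩ := hrec (j+1)
        obtain ⟨r0, r1, r2, r3⟩ := hrec (j+v+1)
        simp only [Ssum, Tsum, add_zero]
        rw [show 4*j+3+1 = 4*(j+1) by ring, show 4*j+3+(4*v+3) = 4*(j+v+1)+2 by ring, show 4*j+3+(4*v+4) = 4*(j+v+1)+3 by ring, p3, q0, r2, r3]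
        try simp only [hzadd]
        try ring_nf
        try simp only [zpow_one, spow2, spow3, spow4, apow2, apow3, apow4, hsq, haa, one_mul, mul_one, neg_mul, mul_neg, neg_neg]
        try ring)
      (Hη 1 (4*v+3) (4*v+4))
      (tendsto_avg_const_mul ((-1:ℝ)^(v+1)) (Hθ 0 v (v+1)))
      (tendsto_avg_const_mul (1:ℝ) (Hθ 0 (v+1) (v+1)))
      (tendsto_avg_const_mul ((-1:ℝ)^v) (Hθ 0 (v+1) (v+1)))
      (tendsto_avg_const_mul (1:ℝ) (Hθ 1 (v+1) (v+1)))
    rw [Ptau v, Pthcc (v+1), Pth1cc (v+1)] at key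
    rw [key]; ring
  have Qe1 : ∀ v : ℤ, η 1 (4*v+2) (4*v+3) = -(1/2) := by
    intro v
    have key := quarter (Ssum a 1 (4*v+2) (4*v+3))
      (fun j => (-1:ℝ) * Ssum a 0 0 0 j) (fun j => (-1:ℝ)^(v+1) * Ssum a 0 v (v+1) j)
      (fun j => (-1:ℝ) * Ssum a 0 0 0 j) (fun j => (-1:ℝ)^v * Ssum a 1 (v+1) (v+1) j)
      1 (hbS 1 (4*v+2) (4*v+3))
      (by
        intro j
        obtain ⟨p0, p1, p2, p3⟩ := hrec (j)
        obtain ⟨q0, q1, q2, q3⟩ := hrec (j+v)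
        simp only [Ssum, Tsum, add_zero]
        rw [show 4*j+(4*v+2) = 4*(j+v)+2 by ring, show 4*j+(4*v+3) = 4*(j+v)+3 by ring, p0, p1, q2, q3]
        try simp only [hzadd]
        try ring_nf
        try simp only [zpow_one, spow2, spow3, spow4, apow2, apow3, apow4, hsq, haa, one_mul, mul_one, neg_mul, mul_neg, neg_neg]
        try ring)
      (by
        intro j
        obtain ⟨p0, p1, p2, p3⟩ := hrec (j)
        obtain ⟨q0, q1, q2, q3⟩ := hrec (j+v)
        obtain ⟨r0, r1, r2, r3⟩ := hrec (j+v+1)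
        simp only [Ssum, Tsum, add_zero]
        rw [show 4*j+1+1 = 4*j+2 by ring, show 4*j+1+(4*v+2) = 4*(j+v)+3 by ring, show 4*j+1+(4*v+3) = 4*(j+v+1) by ring, p1, p2, q3, r0]
        try simp only [hzadd]
        try ring_nf
        try simp only [zpow_one, spow2, spow3, spow4, apow2, apow3, apow4, hsq, haa, one_mul, mul_one, neg_mul, mul_neg, neg_neg]
        try ring)
      (by
        intro j
        obtain ⟨p0, p1, p2, p3⟩ := hrec (j)
        obtain ⟨r0, r1, r2, r3⟩ := hrec (j+v+1)
        simp only [Ssum, Tsum, add_zero]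
        rw [show 4*j+2+1 = 4*j+3 by ring, show 4*j+2+(4*v+2) = 4*(j+v+1) by ring, show 4*j+2+(4*v+3) = 4*(j+v+1)+1 by ring, p2, p3, r0, r1]
        try simp only [hzadd]
        try ring_nf
        try simp only [zpow_one, spow2, spow3, spow4, apow2, apow3, apow4, hsq, haa, one_mul, mul_one, neg_mul, mul_neg, neg_neg]
        try ring)
      (by
        intro j
        obtain ⟨p0, p1, p2, p3⟩ := hrec (j)
        obtain ⟨q0, q1, q2, q3⟩ := hrec (j+1)
        obtain ⟨r0, r1, r2, r3⟩ := hrec (j+v+1)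
        simp only [Ssum, Tsum, add_zero]
        rw [show 4*j+3+1 = 4*(j+1) by ring, show 4*j+3+(4*v+2) = 4*(j+v+1)+1 by ring, show 4*j+3+(4*v+3) = 4*(j+v+1)+2 by ring, p3, q0, r1, r2]
        try simp only [hzadd]
        try ring_nf
        try simp only [zpow_one, spow2, spow3, spow4, apow2, apow3, apow4, hsq, haa, one_mul, mul_one, neg_mul, mul_neg, neg_neg]
        try ring)
      (Hη 1 (4*v+2) (4*v+3))
      (tendsto_avg_const_mul (-1:ℝ) (Hη 0 0 0))
      (tendsto_avg_const_mul ((-1:ℝ)^(v+1)) (Hη 0 v (v+1)))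
      (tendsto_avg_const_mul (-1:ℝ) (Hη 0 0 0))
      (tendsto_avg_const_mul ((-1:ℝ)^v) (Hη 1 (v+1) (v+1)))
    rw [Eone, Pgam v, Peta1cc (v+1)] at key
    rw [key]; ring
  have QeRec : ∀ w : ℤ, η 1 (4*w) (4*w+1) = (2 + (-1:ℝ)^w + (-1:ℝ)^w * η 1 w (w+1))/4 := by
    intro w
    have key := quarter (Ssum a 1 (4*w) (4*w+1))
      (fun j => (1:ℝ) * Ssum a 0 0 0 j) (fun j => (-1:ℝ)^w * Ssum a 0 w w j)
      (fun j => (1:ℝ) * Ssum a 0 0 0 j) (fun j => (-1:ℝ)^w * Ssum a 1 w (w+1) j)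
      1 (hbS 1 (4*w) (4*w+1))
      (by
        intro j
        obtain ⟨p0, p1, p2, p3⟩ := hrec (j)
        obtain ⟨q0, q1, q2, q3⟩ := hrec (j+w)
        simp only [Ssum, Tsum, add_zero]
        rw [show 4*j+4*w = 4*(j+w) by ring, show 4*j+(4*w+1) = 4*(j+w)+1 by ring, p0, p1, q0, q1]
        try simp only [hzadd]
        try ring_nf
        try simp only [zpow_one, spow2, spow3, spow4, apow2, apow3, apow4, hsq, haa, one_mul, mul_one, neg_mul, mul_neg, neg_neg]
        try ring)
      (by
        intro j
        obtain ⟨p0, p1, p2, p3⟩ := hrec (j)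
        obtain ⟨q0, q1, q2, q3⟩ := hrec (j+w)
        simp only [Ssum, Tsum, add_zero]
        rw [show 4*j+1+1 = 4*j+2 by ring, show 4*j+1+4*w = 4*(j+w)+1 by ring, show 4*j+1+(4*w+1) = 4*(j+w)+2 by ring, p1, p2, q1, q2]
        try simp only [hzadd]
        try ring_nf
        try simp only [zpow_one, spow2, spow3, spow4, apow2, apow3, apow4, hsq, haa, one_mul, mul_one, neg_mul, mul_neg, neg_neg]
        try ring)
      (by
        intro j
        obtain ⟨p0, p1, p2, p3⟩ := hrec (j)
        obtain ⟨q0, q1, q2, q3⟩ := hrec (j+w)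
        simp only [Ssum, Tsum, add_zero]
        rw [show 4*j+2+1 = 4*j+3 by ring, show 4*j+2+4*w = 4*(j+w)+2 by ring, show 4*j+2+(4*w+1) = 4*(j+w)+3 by ring, p2, p3, q2, q3]
        try simp only [hzadd]
        try ring_nf
        try simp only [zpow_one, spow2, spow3, spow4, apow2, apow3, apow4, hsq, haa, one_mul, mul_one, neg_mul, mul_neg, neg_neg]
        try ring)
      (by
        intro j
        obtain ⟨p0, p1, p2, p3⟩ := hrec (j)
        obtain ⟨q0, q1, q2, q3⟩ := hrec (j+1)
        obtain ⟨r0, r1, r2, r3⟩ := hrec (j+w)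
        obtain ⟨t0, t1, t2, t3⟩ := hrec (j+w+1)
        simp only [Ssum, Tsum, add_zero]
        rw [show 4*j+3+1 = 4*(j+1) by ring, show 4*j+3+4*w = 4*(j+w)+3 by ring, show 4*j+3+(4*w+1) = 4*(j+w+1) by ring, p3, q0, r3, t0]
        try simp only [hzadd]
        try ring_nf
        try simp only [zpow_one, spow2, spow3, spow4, apow2, apow3, apow4, hsq, haa, one_mul, mul_one, neg_mul, mul_neg, neg_neg]
        try ring)
      (Hη 1 (4*w) (4*w+1))
      (tendsto_avg_const_mul (1:ℝ) (Hη 0 0 0))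
      (tendsto_avg_const_mul ((-1:ℝ)^w) (Hη 0 w w))
      (tendsto_avg_const_mul (1:ℝ) (Hη 0 0 0))
      (tendsto_avg_const_mul ((-1:ℝ)^w) (Hη 1 w (w+1)))
    rw [Eone, Peta0cc w] at key
    rw [key]; ring
  have Qscale2 : ∀ u : ℤ, η 2 (4*u) (4*u+2) = ((-1:ℝ)^u * (2 + 2 * η 1 u (u+1)))/4 := by
    intro u
    have key := quarter (Ssum a 2 (4*u) (4*u+2))
      (fun j => (-1:ℝ)^u * Ssum a 0 0 0 j) (fun j => (-1:ℝ)^u * Ssum a 0 0 0 j)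
      (fun j => (-1:ℝ)^u * Ssum a 1 u (u+1) j) (fun j => (-1:ℝ)^u * Ssum a 1 u (u+1) j)
      1 (hbS 2 (4*u) (4*u+2))
      (by
        intro j
        obtain ⟨p0, p1, p2, p3⟩ := hrec (j)
        obtain ⟨q0, q1, q2, q3⟩ := hrec (j+u)
        simp only [Ssum, Tsum, add_zero]
        rw [show 4*j+2 = 4*j+2 by ring, show 4*j+4*u = 4*(j+u) by ring, show 4*j+(4*u+2) = 4*(j+u)+2 by ring, p0, p2, q0, q2]
        try simp only [hzadd]
        try ring_nf
        try simp only [zpow_one, spow2, spow3, spow4, apow2, apow3, apow4, hsq, haa, one_mul, mul_one, neg_mul, mul_neg, neg_neg]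
        try ring)
      (by
        intro j
        obtain ⟨p0, p1, p2, p3⟩ := hrec (j)
        obtain ⟨q0, q1, q2, q3⟩ := hrec (j+u)
        simp only [Ssum, Tsum, add_zero]
        rw [show 4*j+1+2 = 4*j+3 by ring, show 4*j+1+4*u = 4*(j+u)+1 by ring, show 4*j+1+(4*u+2) = 4*(j+u)+3 by ring, p1, p3, q1, q3]
        try simp only [hzadd]
        try ring_nf
        try simp only [zpow_one, spow2, spow3, spow4, apow2, apow3, apow4, hsq, haa, one_mul, mul_one, neg_mul, mul_neg, neg_neg]
        try ring)
      (by
        intro j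
        obtain ⟨p0, p1, p2, p3⟩ := hrec (j)
        obtain ⟨q0, q1, q2, q3⟩ := hrec (j+1)
        obtain ⟨r0, r1, r2, r3⟩ := hrec (j+u)
        obtain ⟨t0, t1, t2, t3⟩ := hrec (j+u+1)
        simp only [Ssum, Tsum, add_zero]
        rw [show 4*j+2+2 = 4*(j+1) by ring, show 4*j+2+4*u = 4*(j+u)+2 by ring, show 4*j+2+(4*u+2) = 4*(j+u+1) by ring, p2, q0, r2, t0]
        try simp only [hzadd]
        try ring_nf
        try simp only [zpow_one, spow2, spow3, spow4, apow2, apow3, apow4, hsq, haa, one_mul, mul_one, neg_mul, mul_neg, neg_neg]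
        try ring)
      (by
        intro j
        obtain ⟨p0, p1, p2, p3⟩ := hrec (j)
        obtain ⟨q0, q1, q2, q3⟩ := hrec (j+1)
        obtain ⟨r0, r1, r2, r3⟩ := hrec (j+u)
        obtain ⟨t0, t1, t2, t3⟩ := hrec (j+u+1)
        simp only [Ssum, Tsum, add_zero]
        rw [show 4*j+3+2 = 4*(j+1)+1 by ring, show 4*j+3+4*u = 4*(j+u)+3 by ring, show 4*j+3+(4*u+2) = 4*(j+u+1)+1 by ring, p3, q1, r3, t1]
        try simp only [hzadd]
        try ring_nf
        try simp only [zpow_one, spow2, spow3, spow4, apow2, apow3, apow4, hsq, haa, one_mul, mul_one, neg_mul, mul_neg, neg_neg]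
        try ring)
      (Hη 2 (4*u) (4*u+2))
      (tendsto_avg_const_mul ((-1:ℝ)^u) (Hη 0 0 0))
      (tendsto_avg_const_mul ((-1:ℝ)^u) (Hη 0 0 0))
      (tendsto_avg_const_mul ((-1:ℝ)^u) (Hη 1 u (u+1)))
      (tendsto_avg_const_mul ((-1:ℝ)^u) (Hη 1 u (u+1)))
    rw [Eone] at key
    rw [key]; ring
  have Qscale4 : ∀ x y z : ℤ, η (4*x) (4*y) (4*z) = ((2 + 2 * ((-1:ℝ)^x * (-1:ℝ)^y * (-1:ℝ)^z)) * η x y z)/4 := by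
    intro x y z
    have key := quarter (Ssum a (4*x) (4*y) (4*z))
      (fun j => (1:ℝ) * Ssum a x y z j) (fun j => (1:ℝ) * Ssum a x y z j)
      (fun j => ((-1:ℝ)^x * (-1:ℝ)^y * (-1:ℝ)^z) * Ssum a x y z j) (fun j => ((-1:ℝ)^x * (-1:ℝ)^y * (-1:ℝ)^z) * Ssum a x y z j)
      1 (hbS (4*x) (4*y) (4*z))
      (by
        intro j
        obtain ⟨p0, p1, p2, p3⟩ := hrec (j)
        obtain ⟨q0, q1, q2, q3⟩ := hrec (j+x)
        obtain ⟨r0, r1, r2, r3⟩ := hrec (j+y)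
        obtain ⟨t0, t1, t2, t3⟩ := hrec (j+z)
        simp only [Ssum, Tsum, add_zero]
        rw [show 4*j+4*x = 4*(j+x) by ring, show 4*j+4*y = 4*(j+y) by ring, show 4*j+4*z = 4*(j+z) by ring, p0, q0, r0, t0]
        try simp only [hzadd]
        try ring_nf
        try simp only [zpow_one, spow2, spow3, spow4, apow2, apow3, apow4, hsq, haa, one_mul, mul_one, neg_mul, mul_neg, neg_neg]
        try ring)
      (by
        intro j
        obtain ⟨p0, p1, p2, p3⟩ := hrec (j)
        obtain ⟨q0, q1, q2, q3⟩ := hrec (j+x)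
        obtain ⟨r0, r1, r2, r3⟩ := hrec (j+y)
        obtain ⟨t0, t1, t2, t3⟩ := hrec (j+z)
        simp only [Ssum, Tsum, add_zero]
        rw [show 4*j+1+4*x = 4*(j+x)+1 by ring, show 4*j+1+4*y = 4*(j+y)+1 by ring, show 4*j+1+4*z = 4*(j+z)+1 by ring, p1, q1, r1, t1]
        try simp only [hzadd]
        try ring_nf
        try simp only [zpow_one, spow2, spow3, spow4, apow2, apow3, apow4, hsq, haa, one_mul, mul_one, neg_mul, mul_neg, neg_neg]
        try ring)
      (by
        intro j
        obtain ⟨p0, p1, p2, p3⟩ := hrec (j)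
        obtain ⟨q0, q1, q2, q3⟩ := hrec (j+x)
        obtain ⟨r0, r1, r2, r3⟩ := hrec (j+y)
        obtain ⟨t0, t1, t2, t3⟩ := hrec (j+z)
        simp only [Ssum, Tsum, add_zero]
        rw [show 4*j+2+4*x = 4*(j+x)+2 by ring, show 4*j+2+4*y = 4*(j+y)+2 by ring, show 4*j+2+4*z = 4*(j+z)+2 by ring, p2, q2, r2, t2]
        try simp only [hzadd]
        try ring_nf
        try simp only [zpow_one, spow2, spow3, spow4, apow2, apow3, apow4, hsq, haa, one_mul, mul_one, neg_mul, mul_neg, neg_neg]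
        try ring)
      (by
        intro j
        obtain ⟨p0, p1, p2, p3⟩ := hrec (j)
        obtain ⟨q0, q1, q2, q3⟩ := hrec (j+x)
        obtain ⟨r0, r1, r2, r3⟩ := hrec (j+y)
        obtain ⟨t0, t1, t2, t3⟩ := hrec (j+z)
        simp only [Ssum, Tsum, add_zero]
        rw [show 4*j+3+4*x = 4*(j+x)+3 by ring, show 4*j+3+4*y = 4*(j+y)+3 by ring, show 4*j+3+4*z = 4*(j+z)+3 by ring, p3, q3, r3, t3]
        try simp only [hzadd]
        try ring_nf
        try simp only [zpow_one, spow2, spow3, spow4, apow2, apow3, apow4, hsq, haa, one_mul, mul_one, neg_mul, mul_neg, neg_neg]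
        try ring)
      (Hη (4*x) (4*y) (4*z))
      (tendsto_avg_const_mul (1:ℝ) (Hη x y z))
      (tendsto_avg_const_mul (1:ℝ) (Hη x y z))
      (tendsto_avg_const_mul ((-1:ℝ)^x * (-1:ℝ)^y * (-1:ℝ)^z) (Hη x y z))
      (tendsto_avg_const_mul ((-1:ℝ)^x * (-1:ℝ)^y * (-1:ℝ)^z) (Hη x y z))
    rw [key]; ring
  have Escale4 : ∀ x y z : ℤ, Even (x+y+z) → η (4*x) (4*y) (4*z) = η x y z := by
    intro x y z hev
    have hE : (-1:ℝ)^x * (-1:ℝ)^y * (-1:ℝ)^z = 1 := by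
      rw [← hzadd, ← hzadd]
      exact hev.neg_one_zpow
    rw [Qscale4 x y z, hE]; ring
  -- base values
  have he0 : η 1 (2*l+1) (2*l+1+1) = 0 := by
    rcases Int.even_or_odd l with ⟨w,hw⟩|⟨w,hw⟩
    · have h := Qodd1 w
      rw [show (4*w+1 : ℤ) = 2*l+1 by omega, show (4*w+2:ℤ) = 2*l+1+1 by omega] at h
      exact h
    · have h := Qodd3 w
      rw [show (4*w+3 : ℤ) = 2*l+1 by omega, show (4*w+4:ℤ) = 2*l+1+1 by omega] at h
      exact h
  have hoddl : ((-1:ℝ))^(2*l+1) = -1 := Odd.neg_one_zpow ⟨l, rfl⟩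
  -- main recursion: e (p+1) = 1 - 3/2^(p+1)
  have main : ∀ p : ℕ, η 1 ((2:ℤ)^(p+1)*(2*l+1)) ((2:ℤ)^(p+1)*(2*l+1)+1) = 1 - 3/(2:ℝ)^(p+1) := by
    have P1 : η 1 ((2:ℤ)^(0+1)*(2*l+1)) ((2:ℤ)^(0+1)*(2*l+1)+1) = 1 - 3/(2:ℝ)^(0+1) := by
      have h := Qe1 l
      rw [show (4*l+2:ℤ) = (2:ℤ)^(0+1)*(2*l+1) by ring, show (4*l+3:ℤ) = (2:ℤ)^(0+1)*(2*l+1)+1 by ring] at h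
      rw [h]; norm_num
    have P2 : η 1 ((2:ℤ)^(1+1)*(2*l+1)) ((2:ℤ)^(1+1)*(2*l+1)+1) = 1 - 3/(2:ℝ)^(1+1) := by
      have h := QeRec (2*l+1)
      rw [hoddl, he0] at h
      rw [show (2:ℤ)^(1+1)*(2*l+1) = 4*(2*l+1) by ring, h]
      norm_num
    have step : ∀ q : ℕ, η 1 ((2:ℤ)^(q+1)*(2*l+1)) ((2:ℤ)^(q+1)*(2*l+1)+1) = 1 - 3/(2:ℝ)^(q+1) →
        η 1 ((2:ℤ)^(q+3)*(2*l+1)) ((2:ℤ)^(q+3)*(2*l+1)+1) = 1 - 3/(2:ℝ)^(q+3) := by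
      intro q hq
      have hev : Even ((2:ℤ)^(q+1)*(2*l+1)) := ⟨(2:ℤ)^q*(2*l+1), by ring⟩
      have h := QeRec ((2:ℤ)^(q+1)*(2*l+1))
      rw [hev.neg_one_zpow, hq] at h
      rw [show (2:ℤ)^(q+3)*(2*l+1) = 4*((2:ℤ)^(q+1)*(2*l+1)) by ring, h]
      have hp : ((2:ℝ)^(q+1)) ≠ 0 := by positivity
      field_simp
      ring
    have pair : ∀ p : ℕ,
        (η 1 ((2:ℤ)^(p+1)*(2*l+1)) ((2:ℤ)^(p+1)*(2*l+1)+1) = 1 - 3/(2:ℝ)^(p+1)) ∧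
        (η 1 ((2:ℤ)^(p+2)*(2*l+1)) ((2:ℤ)^(p+2)*(2*l+1)+1) = 1 - 3/(2:ℝ)^(p+2)) := by
      intro p
      induction p with
      | zero => exact ⟨P1, P2⟩
      | succ q ih =>
        refine ⟨ih.2, ?_⟩
        have := step q ih.1
        rw [show q+3 = q+1+2 by omega] at this
        exact this
    exact fun p => (pair p).1
  -- reduce n
  obtain ⟨n', rfl⟩ : ∃ n', n = n'+1 := ⟨n-1, by omega⟩
  -- scale 1 value
  have hE1 : η 2 (2*((2:ℤ)^(n'+1)*(2*l+1))) (2*((2:ℤ)^(n'+1)*(2*l+1))+2) = 1 - 3/(2:ℝ)^(n'+1) := by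
    cases n' with
    | zero =>
      have h := Qscale2 (2*l+1)
      rw [hoddl, he0] at h
      rw [show 2*((2:ℤ)^(0+1)*(2*l+1)) = 4*(2*l+1) by ring, h]
      norm_num
    | succ q =>
      have hev : Even ((2:ℤ)^(q+1)*(2*l+1)) := ⟨(2:ℤ)^q*(2*l+1), by ring⟩
      have h := Qscale2 ((2:ℤ)^(q+1)*(2*l+1))
      rw [hev.neg_one_zpow, main q] at h
      rw [show 2*((2:ℤ)^(q+1+1)*(2*l+1)) = 4*((2:ℤ)^(q+1)*(2*l+1)) by ring, h]
      have hp : ((2:ℝ)^(q+1)) ≠ 0 := by positivity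
      field_simp
      ring
  -- scale induction
  have R : ∀ s : ℕ,
      η ((2:ℤ)^s) ((2:ℤ)^s*((2:ℤ)^(n'+1)*(2*l+1))) ((2:ℤ)^s*((2:ℤ)^(n'+1)*(2*l+1)+1))
        = 1 - 3/(2:ℝ)^(n'+1) := by
    have R0 : η ((2:ℤ)^0) ((2:ℤ)^0*((2:ℤ)^(n'+1)*(2*l+1))) ((2:ℤ)^0*((2:ℤ)^(n'+1)*(2*l+1)+1))
        = 1 - 3/(2:ℝ)^(n'+1) := by
      rw [show ((2:ℤ)^0 : ℤ) = 1 by norm_num, one_mul, one_mul,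
        show (2:ℤ)^(n'+1)*(2*l+1)+1 = (2:ℤ)^(n'+1)*(2*l+1)+1 by ring]
      exact main n'
    have R1 : η ((2:ℤ)^1) ((2:ℤ)^1*((2:ℤ)^(n'+1)*(2*l+1))) ((2:ℤ)^1*((2:ℤ)^(n'+1)*(2*l+1)+1))
        = 1 - 3/(2:ℝ)^(n'+1) := by
      rw [show ((2:ℤ)^1 : ℤ) = 2 by norm_num]
      rw [show 2*((2:ℤ)^(n'+1)*(2*l+1)+1) = 2*((2:ℤ)^(n'+1)*(2*l+1))+2 by ring]
      exact hE1
    have Rstep : ∀ s : ℕ,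
        η ((2:ℤ)^s) ((2:ℤ)^s*((2:ℤ)^(n'+1)*(2*l+1))) ((2:ℤ)^s*((2:ℤ)^(n'+1)*(2*l+1)+1))
          = 1 - 3/(2:ℝ)^(n'+1) →
        η ((2:ℤ)^(s+2)) ((2:ℤ)^(s+2)*((2:ℤ)^(n'+1)*(2*l+1))) ((2:ℤ)^(s+2)*((2:ℤ)^(n'+1)*(2*l+1)+1))
          = 1 - 3/(2:ℝ)^(n'+1) := by
      intro s hs
      have hev : Even ((2:ℤ)^s + (2:ℤ)^s*((2:ℤ)^(n'+1)*(2*l+1)) + (2:ℤ)^s*((2:ℤ)^(n'+1)*(2*l+1)+1)) :=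
        ⟨(2:ℤ)^s + (2:ℤ)^s*((2:ℤ)^(n'+1)*(2*l+1)), by ring⟩
      have h := Escale4 ((2:ℤ)^s) ((2:ℤ)^s*((2:ℤ)^(n'+1)*(2*l+1))) ((2:ℤ)^s*((2:ℤ)^(n'+1)*(2*l+1)+1)) hev
      rw [show (2:ℤ)^(s+2) = 4*((2:ℤ)^s) by ring,
        show 4*((2:ℤ)^s)*((2:ℤ)^(n'+1)*(2*l+1)) = 4*((2:ℤ)^s*((2:ℤ)^(n'+1)*(2*l+1))) by ring,
        show 4*((2:ℤ)^s)*((2:ℤ)^(n'+1)*(2*l+1)+1) = 4*((2:ℤ)^s*((2:ℤ)^(n'+1)*(2*l+1)+1)) by ring,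
        h]
      exact hs
    have pair : ∀ s : ℕ,
        (η ((2:ℤ)^s) ((2:ℤ)^s*((2:ℤ)^(n'+1)*(2*l+1))) ((2:ℤ)^s*((2:ℤ)^(n'+1)*(2*l+1)+1))
          = 1 - 3/(2:ℝ)^(n'+1)) ∧
        (η ((2:ℤ)^(s+1)) ((2:ℤ)^(s+1)*((2:ℤ)^(n'+1)*(2*l+1))) ((2:ℤ)^(s+1)*((2:ℤ)^(n'+1)*(2*l+1)+1))
          = 1 - 3/(2:ℝ)^(n'+1)) := by
      intro s
      induction s with
      | zero => exact ⟨R0, R1⟩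
      | succ q ih =>
        refine ⟨ih.2, ?_⟩
        have := Rstep q ih.1
        rw [show q+2 = q+1+1 by omega] at this
        exact this
    exact fun s => (pair s).1
  rw [mul_one]
  exact R m
end

section
/- For the balanced Rudin–Shapiro sequence, the Cesàro averages of the absolute values of the 4-point correlations vanish: lim_{N→∞} (1/N³) Σ_{0 ≤ m_1,m_2,m_3 ≤ N−1} |η^{(4)}(m_1,m_2,m_3)| = 0 and lim_{N→∞} (1/N³) Σ_{0 ≤ m_1,m_2,m_3 ≤ N−1} |θ^{(4)}(m_1,m_2,m_3)| = 0. -/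
open Filter Finset

/-- Symmetric Cesàro average. -/
noncomputable def cAvg (f : ℤ → ℝ) (N : ℕ) : ℝ :=
  (1 / (2 * (N : ℝ) + 1)) * ∑ i ∈ Finset.Icc (-(N : ℤ)) (N : ℤ), f i

lemma tendsto_cAvg_const_mul {f : ℤ → ℝ} {l : ℝ} (c : ℝ)
    (h : Tendsto (cAvg f) atTop (nhds l)) :
    Tendsto (cAvg (fun i => c * f i)) atTop (nhds (c * l)) := by
  have : cAvg (fun i => c * f i) = fun N => c * cAvg f N := by
    funext N
    simp only [cAvg, ← Finset.mul_sum]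
    ring
  rw [this]
  exact h.const_mul c

lemma ratio_tendsto : Tendsto (fun N : ℕ => (2 * (N : ℝ) + 1) / (8 * N + 7)) atTop (nhds (1/4)) := by
  have h1 : Tendsto (fun N : ℕ => (2 + 1 / (N:ℝ)) / (8 + 7 * (1 / N))) atTop (nhds ((2 + 0)/(8 + 7*0))) := by
    apply Tendsto.div
    · exact tendsto_const_nhds.add tendsto_one_div_atTop_nhds_zero_nat
    · exact tendsto_const_nhds.add (tendsto_one_div_atTop_nhds_zero_nat.const_mul 7)
    · norm_num
  norm_num at h1
  apply h1.congr'
  filter_upwards [eventually_ge_atTop 1] with N hN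
  have hN0 : (N:ℝ) ≠ 0 := by positivity
  field_simp

lemma inv_lin_tendsto : Tendsto (fun N : ℕ => 1 / (8 * (N : ℝ) + 7)) atTop (nhds 0) := by
  apply squeeze_zero' (g := fun N : ℕ => 1 / (N : ℝ))
  · filter_upwards with N; positivity
  · filter_upwards [eventually_ge_atTop 1] with N hN
    apply one_div_le_one_div_of_le
    · exact_mod_cast hN
    · have : (1:ℝ) ≤ (N:ℝ) := by exact_mod_cast hN
      linarith
  · exact tendsto_one_div_atTop_nhds_zero_nat

/-- Splitting a symmetric average according to residues mod 4. -/
lemma quarter {F G0 G1 G2 G3 : ℤ → ℝ}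
    (hFG : ∀ j : ℤ, F (4*j) = G0 j ∧ F (4*j+1) = G1 j ∧ F (4*j+2) = G2 j ∧ F (4*j+3) = G3 j)
    (hb : ∀ i, |F i| ≤ 1)
    {l l0 l1 l2 l3 : ℝ}
    (hF : Tendsto (cAvg F) atTop (nhds l))
    (h0 : Tendsto (cAvg G0) atTop (nhds l0))
    (h1 : Tendsto (cAvg G1) atTop (nhds l1))
    (h2 : Tendsto (cAvg G2) atTop (nhds l2))
    (h3 : Tendsto (cAvg G3) atTop (nhds l3)) :
    l = (l0 + l1 + l2 + l3) / 4 := by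
  -- key finite identity
  have key : ∀ N : ℕ, ∑ i ∈ Finset.Icc (-(4*(N:ℤ))) (4*N+3), F i
      = ∑ j ∈ Finset.Icc (-(N:ℤ)) (N:ℤ), (G0 j + G1 j + G2 j + G3 j) := by
    intro N
    have h4 : ∀ j ∈ Finset.Icc (-(N:ℤ)) (N:ℤ),
        G0 j + G1 j + G2 j + G3 j = ∑ s ∈ Finset.range 4, F (4*j + s) := by
      intro j _
      obtain ⟨e0, e1, e2, e3⟩ := hFG j
      simp [Finset.sum_range_succ, e0, e1, e2, e3]
    rw [Finset.sum_congr rfl h4, ← Finset.sum_product']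
    refine Finset.sum_nbij' (fun i => (i / 4, (i % 4).toNat)) (fun p => 4 * p.1 + (p.2 : ℤ))
      ?_ ?_ ?_ ?_ ?_
    · intro i hi
      simp only [Finset.mem_Icc, Finset.mem_product, Finset.mem_range] at hi ⊢
      omega
    · intro p hp
      simp only [Finset.mem_Icc, Finset.mem_product, Finset.mem_range] at hp ⊢
      omega
    · intro i hi
      simp only []
      omega
    · intro p hp
      simp only [Finset.mem_Icc, Finset.mem_product, Finset.mem_range] at hp
      have h1' : (4 * p.1 + (p.2:ℤ)) / 4 = p.1 := by omega
      have h2' : ((4 * p.1 + (p.2:ℤ)) % 4).toNat = p.2 := by omega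
      simp only [h1', h2']
    · intro i hi
      have : 4 * (i / 4) + ((i % 4).toNat : ℤ) = i := by omega
      exact (congrArg F this).symm
  -- subsequence limit
  have hmono : Tendsto (fun N : ℕ => 4 * N + 3) atTop atTop :=
    Filter.tendsto_atTop_atTop.2 (fun b => ⟨b, fun n hn => by omega⟩)
  have hsub : Tendsto (fun N : ℕ => cAvg F (4 * N + 3)) atTop (nhds l) := hF.comp hmono
  -- rewrite the subsequence
  have hsplit : ∀ N : ℕ, cAvg F (4 * N + 3)
      = (2*(N:ℝ)+1) / (8*N+7) * (cAvg G0 N + cAvg G1 N + cAvg G2 N + cAvg G3 N)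
        + (1 / (8*(N:ℝ)+7)) * (F (-(4*N)-1) + F (-(4*N)-2) + F (-(4*N)-3)) := by
    intro N
    have hIcc : Finset.Icc (-(((4*N+3 : ℕ)) : ℤ)) ((4*N+3 : ℕ) : ℤ)
        = insert (-(4*(N:ℤ))-1) (insert (-(4*(N:ℤ))-2) (insert (-(4*(N:ℤ))-3)
            (Finset.Icc (-(4*(N:ℤ))) (4*N+3)))) := by
      ext i
      simp only [Finset.mem_insert, Finset.mem_Icc]
      push_cast
      omega
    have hni : (-(4*(N:ℤ))-1) ∉ insert (-(4*(N:ℤ))-2) (insert (-(4*(N:ℤ))-3)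
        (Finset.Icc (-(4*(N:ℤ))) (4*N+3))) := by
      simp only [Finset.mem_insert, Finset.mem_Icc]; omega
    have hni2 : (-(4*(N:ℤ))-2) ∉ insert (-(4*(N:ℤ))-3) (Finset.Icc (-(4*(N:ℤ))) (4*N+3)) := by
      simp only [Finset.mem_insert, Finset.mem_Icc]; omega
    have hni3 : (-(4*(N:ℤ))-3) ∉ Finset.Icc (-(4*(N:ℤ))) (4*N+3) := by
      simp only [Finset.mem_Icc]; omega
    have hsum : ∑ i ∈ Finset.Icc (-(((4*N+3 : ℕ)) : ℤ)) ((4*N+3 : ℕ) : ℤ), F i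
        = F (-(4*(N:ℤ))-1) + F (-(4*(N:ℤ))-2) + F (-(4*(N:ℤ))-3)
          + ∑ j ∈ Finset.Icc (-(N:ℤ)) (N:ℤ), (G0 j + G1 j + G2 j + G3 j) := by
      rw [hIcc, Finset.sum_insert hni, Finset.sum_insert hni2, Finset.sum_insert hni3, key N]
      ring
    have h2N : (2*(N:ℝ)+1) ≠ 0 := by positivity
    simp only [cAvg]
    rw [hsum]
    simp only [Finset.sum_add_distrib]
    push_cast
    field_simp
    ring
  rw [funext hsplit] at hsub
  have hlim2 : Tendsto (fun N : ℕ =>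
      (2*(N:ℝ)+1) / (8*N+7) * (cAvg G0 N + cAvg G1 N + cAvg G2 N + cAvg G3 N)
        + (1 / (8*(N:ℝ)+7)) * (F (-(4*N)-1) + F (-(4*N)-2) + F (-(4*N)-3)))
      atTop (nhds (1/4 * (l0 + l1 + l2 + l3) + 0)) := by
    apply Tendsto.add
    · exact ratio_tendsto.mul (((h0.add h1).add h2).add h3)
    · apply squeeze_zero_norm (a := fun N : ℕ => 3 / (8*(N:ℝ)+7))
      · intro N
        have b1 := hb (-(4*(N:ℤ))-1)
        have b2 := hb (-(4*(N:ℤ))-2)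
        have b3 := hb (-(4*(N:ℤ))-3)
        have hpos : (0:ℝ) < 8*(N:ℝ)+7 := by positivity
        rw [Real.norm_eq_abs, abs_mul, abs_div, abs_one]
        rw [abs_of_pos hpos]
        rw [div_mul_eq_mul_div, one_mul, div_le_div_iff₀ hpos hpos]
        have : |F (-(4*(N:ℤ))-1) + F (-(4*(N:ℤ))-2) + F (-(4*(N:ℤ))-3)| ≤ 3 := by
          calc |F (-(4*(N:ℤ))-1) + F (-(4*(N:ℤ))-2) + F (-(4*(N:ℤ))-3)|
              ≤ |F (-(4*(N:ℤ))-1)| + |F (-(4*(N:ℤ))-2)| + |F (-(4*(N:ℤ))-3)| := by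
                apply (abs_add_le _ _).trans; gcongr; exact abs_add_le _ _
            _ ≤ 3 := by linarith
        nlinarith [abs_nonneg (F (-(4*(N:ℤ))-1) + F (-(4*(N:ℤ))-2) + F (-(4*(N:ℤ))-3))]
      · have := inv_lin_tendsto.const_mul (3:ℝ)
        simpa [mul_one_div, div_eq_mul_inv] using this
  have := tendsto_nhds_unique hsub hlim2
  rw [this]; ring
lemma cAvg_shift {H : ℤ → ℝ} (hb : ∀ i, |H i| ≤ 1) {l : ℝ}
    (h : Tendsto (cAvg H) atTop (nhds l)) (m : ℤ) :
    Tendsto (cAvg (fun i => H (i + m))) atTop (nhds l) := by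
  have hdiff : ∀ N : ℕ, |cAvg (fun i => H (i + m)) N - cAvg H N|
      ≤ (1 / (2*(N:ℝ)+1)) * (2 * (m.natAbs : ℝ)) := by
    intro N
    set A : Finset ℤ := Finset.Icc (-(N:ℤ) + m) ((N:ℤ) + m) with hA
    set B : Finset ℤ := Finset.Icc (-(N:ℤ)) (N:ℤ) with hB
    have hshift : ∑ i ∈ B, H (i + m) = ∑ i ∈ A, H i := by
      rw [hA, hB, ← Finset.map_add_right_Icc, Finset.sum_map]
      rfl
    have hsplit : ∑ i ∈ A, H i - ∑ i ∈ B, H i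
        = ∑ i ∈ A \ B, H i - ∑ i ∈ B \ A, H i := by
      have h1 := Finset.sum_inter_add_sum_sdiff A B H
      have h2 := Finset.sum_inter_add_sum_sdiff B A H
      rw [Finset.inter_comm] at h2
      linarith
    have hbnd : ∀ (S : Finset ℤ), |∑ i ∈ S, H i| ≤ S.card := by
      intro S
      calc |∑ i ∈ S, H i| ≤ ∑ i ∈ S, |H i| := Finset.abs_sum_le_sum_abs _ _
        _ ≤ ∑ i ∈ S, 1 := Finset.sum_le_sum (fun i _ => hb i)
        _ = S.card := by simp
    have hcard1 : ((A \ B).card : ℝ) ≤ (m.natAbs : ℝ) := by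
      have hsub : A \ B ⊆ Finset.Icc ((N:ℤ)+1) ((N:ℤ)+m) ∪ Finset.Icc (-(N:ℤ)+m) (-(N:ℤ)-1) := by
        intro i hi
        simp only [hA, hB, Finset.mem_sdiff, Finset.mem_Icc, Finset.mem_union] at hi ⊢
        omega
      have h1 := Finset.card_le_card hsub
      have hc := Finset.card_union_le (Finset.Icc ((N:ℤ)+1) ((N:ℤ)+m)) (Finset.Icc (-(N:ℤ)+m) (-(N:ℤ)-1))
      rw [Int.card_Icc, Int.card_Icc] at hc
      have h2 : (A \ B).card ≤ m.natAbs := by omega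
      exact_mod_cast h2
    have hcard2 : ((B \ A).card : ℝ) ≤ (m.natAbs : ℝ) := by
      have hsub : B \ A ⊆ Finset.Icc (-(N:ℤ)) (-(N:ℤ)+m-1) ∪ Finset.Icc ((N:ℤ)+m+1) ((N:ℤ)) := by
        intro i hi
        simp only [hA, hB, Finset.mem_sdiff, Finset.mem_Icc, Finset.mem_union] at hi ⊢
        omega
      have h1 := Finset.card_le_card hsub
      have hc := Finset.card_union_le (Finset.Icc (-(N:ℤ)) (-(N:ℤ)+m-1)) (Finset.Icc ((N:ℤ)+m+1) ((N:ℤ)))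
      rw [Int.card_Icc, Int.card_Icc] at hc
      have h2 : (B \ A).card ≤ m.natAbs := by omega
      exact_mod_cast h2
    have hpos : (0:ℝ) < 2*(N:ℝ)+1 := by positivity
    have hsd : |∑ i ∈ A, H i - ∑ i ∈ B, H i| ≤ 2 * (m.natAbs : ℝ) := by
      rw [hsplit]
      calc |∑ i ∈ A \ B, H i - ∑ i ∈ B \ A, H i|
          ≤ |∑ i ∈ A \ B, H i| + |∑ i ∈ B \ A, H i| := abs_sub _ _
        _ ≤ ((A \ B).card : ℝ) + ((B \ A).card : ℝ) := add_le_add (hbnd _) (hbnd _)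
        _ ≤ 2 * (m.natAbs : ℝ) := by linarith
    simp only [cAvg]
    rw [← mul_sub, abs_mul, hshift, abs_of_pos (by positivity : (0:ℝ) < 1/(2*(N:ℝ)+1))]
    exact mul_le_mul_of_nonneg_left hsd (by positivity)
  have hzero : Tendsto (fun N : ℕ => cAvg (fun i => H (i + m)) N - cAvg H N) atTop (nhds 0) := by
    apply squeeze_zero_norm (a := fun N : ℕ => (1 / (2*(N:ℝ)+1)) * (2 * (m.natAbs : ℝ)))
    · intro N; rw [Real.norm_eq_abs]; exact hdiff N
    · have h1 : Tendsto (fun N : ℕ => 1 / (2*(N:ℝ)+1)) atTop (nhds 0) := by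
        apply squeeze_zero' (g := fun N : ℕ => 1 / (N : ℝ))
        · filter_upwards with N; positivity
        · filter_upwards [eventually_ge_atTop 1] with N hN
          apply one_div_le_one_div_of_le
          · exact_mod_cast hN
          · have : (1:ℝ) ≤ (N:ℝ) := by exact_mod_cast hN
            linarith
        · exact tendsto_one_div_atTop_nhds_zero_nat
      simpa using h1.mul_const (2 * (m.natAbs : ℝ))
  have := h.add hzero
  rw [add_zero] at this
  apply this.congr
  intro N; ring

lemma corr_vanish (a : ℤ → ℝ) (ha : ∀ i, a i = 1 ∨ a i = -1)
    (hrec : ∀ m : ℤ, a (4 * m) = a m ∧ a (4 * m + 1) = a m ∧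
      a (4 * m + 2) = (-1 : ℝ) ^ m * a m ∧ a (4 * m + 3) = -((-1 : ℝ) ^ m) * a m)
    (γ δ : ℤ → ℝ)
    (hγ : ∀ d : ℤ, Tendsto (cAvg (fun i => a i * a (i + d))) atTop (nhds (γ d)))
    (hδ : ∀ d : ℤ, Tendsto (cAvg (fun i => (-1:ℝ)^i * (a i * a (i + d)))) atTop (nhds (δ d))) :
    ∀ d : ℤ, (d ≠ 0 → γ d = 0) ∧ δ d = 0 := by
  have hb1 : ∀ i, |a i| = 1 := by
    intro i; rcases ha i with h | h <;> rw [h] <;> norm_num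
  have hz1 : ∀ n : ℤ, ((-1:ℝ)^n) * ((-1:ℝ)^n) = 1 := by
    intro n; rw [← mul_zpow]; norm_num
  have hzadd : ∀ m n : ℤ, (-1:ℝ)^(m+n) = (-1:ℝ)^m * (-1:ℝ)^n :=
    zpow_add₀ (by norm_num)
  have hpm : ∀ n : ℤ, (-1:ℝ)^n = 1 ∨ (-1:ℝ)^n = -1 := by
    intro n
    rcases Int.even_or_odd n with h | h
    · left; exact h.neg_one_zpow
    · right
      obtain ⟨k, hk⟩ := h
      subst hk
      rw [hzadd, zpow_mul]
      norm_num
  have hzabs : ∀ n : ℤ, |(-1:ℝ)^n| = 1 := by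
    intro n; rcases hpm n with h | h <;> rw [h] <;> norm_num
  have hzone : (-1:ℝ)^(1:ℤ) = -1 := by norm_num
  have hz2 : (-1:ℝ)^(2:ℤ) = 1 := by norm_num
  have hz3 : (-1:ℝ)^(3:ℤ) = -1 := by norm_num
  have hz40 : ∀ j : ℤ, (-1:ℝ)^(4*j) = 1 := by
    intro j; rw [zpow_mul]; norm_num
  have hz4 : ∀ j s : ℤ, (-1:ℝ)^(4*j+s) = (-1:ℝ)^s := by
    intro j s; rw [hzadd, hz40, one_mul]
  have hbu : ∀ d i, |a i * a (i + d)| ≤ 1 := by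
    intro d i; rw [abs_mul, hb1, hb1]; norm_num
  have hbv : ∀ d i, |(-1:ℝ)^i * (a i * a (i + d))| ≤ 1 := by
    intro d i; rw [abs_mul, hzabs]; simpa using hbu d i
  -- the eight functional equations
  have Eγ0 : ∀ e : ℤ, γ (4*e) = (γ e + γ e + ((-1:ℝ)^e) * γ e + ((-1:ℝ)^e) * γ e)/4 := by
    intro e
    refine quarter ?_ (hbu (4*e)) (hγ (4*e)) (hγ e) (hγ e)
      (tendsto_cAvg_const_mul ((-1:ℝ)^e) (hγ e)) (tendsto_cAvg_const_mul ((-1:ℝ)^e) (hγ e))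
    intro j
    refine ⟨?_, ?_, ?_, ?_⟩ <;>
      [rw [show 4*j + (4*e) = 4*(j+e) by ring, (hrec j).1, (hrec (j+e)).1];
       rw [show 4*j+1 + (4*e) = 4*(j+e)+1 by ring, (hrec j).2.1, (hrec (j+e)).2.1];
       rw [show 4*j+2 + (4*e) = 4*(j+e)+2 by ring, (hrec j).2.2.1, (hrec (j+e)).2.2.1];
       rw [show 4*j+3 + (4*e) = 4*(j+e)+3 by ring, (hrec j).2.2.2, (hrec (j+e)).2.2.2]] <;>
      (try simp only [hzadd, hzone, hz2, hz3]) <;>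
      rcases hpm j with hj | hj <;> rcases hpm e with he' | he' <;>
      (try simp only [hj, he']) <;> ring
  have Eγ1 : ∀ e : ℤ, γ (4*e+1)
      = (γ e + ((-1:ℝ)^e) * δ e + (-((-1:ℝ)^e)) * γ e + (-1:ℝ) * δ (e+1))/4 := by
    intro e
    refine quarter ?_ (hbu (4*e+1)) (hγ (4*e+1)) (hγ e)
      (tendsto_cAvg_const_mul ((-1:ℝ)^e) (hδ e))
      (tendsto_cAvg_const_mul (-((-1:ℝ)^e)) (hγ e))
      (tendsto_cAvg_const_mul (-1:ℝ) (hδ (e+1)))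
    intro j
    refine ⟨?_, ?_, ?_, ?_⟩ <;>
      [rw [show 4*j + (4*e+1) = 4*(j+e)+1 by ring, (hrec j).1, (hrec (j+e)).2.1];
       rw [show 4*j+1 + (4*e+1) = 4*(j+e)+2 by ring, (hrec j).2.1, (hrec (j+e)).2.2.1];
       rw [show 4*j+2 + (4*e+1) = 4*(j+e)+3 by ring, (hrec j).2.2.1, (hrec (j+e)).2.2.2];
       rw [show 4*j+3 + (4*e+1) = 4*(j+e+1) by ring, (hrec j).2.2.2, (hrec (j+e+1)).1]] <;>
      (try rw [show j + (e+1) = j+e+1 by ring]) <;>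
      (try simp only [hzadd, hzone, hz2, hz3]) <;>
      rcases hpm j with hj | hj <;> rcases hpm e with he' | he' <;>
      (try simp only [hj, he']) <;> ring
  have Eγ2 : ∀ e : ℤ, γ (4*e+2)
      = (((-1:ℝ)^e) * δ e + (-((-1:ℝ)^e)) * δ e + δ (e+1) + (-1:ℝ) * δ (e+1))/4 := by
    intro e
    refine quarter ?_ (hbu (4*e+2)) (hγ (4*e+2))
      (tendsto_cAvg_const_mul ((-1:ℝ)^e) (hδ e))
      (tendsto_cAvg_const_mul (-((-1:ℝ)^e)) (hδ e))
      (hδ (e+1))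
      (tendsto_cAvg_const_mul (-1:ℝ) (hδ (e+1)))
    intro j
    refine ⟨?_, ?_, ?_, ?_⟩ <;>
      [rw [show 4*j + (4*e+2) = 4*(j+e)+2 by ring, (hrec j).1, (hrec (j+e)).2.2.1];
       rw [show 4*j+1 + (4*e+2) = 4*(j+e)+3 by ring, (hrec j).2.1, (hrec (j+e)).2.2.2];
       rw [show 4*j+2 + (4*e+2) = 4*(j+e+1) by ring, (hrec j).2.2.1, (hrec (j+e+1)).1];
       rw [show 4*j+3 + (4*e+2) = 4*(j+e+1)+1 by ring, (hrec j).2.2.2, (hrec (j+e+1)).2.1]] <;>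
      (try rw [show j + (e+1) = j+e+1 by ring]) <;>
      (try simp only [hzadd, hzone, hz2, hz3]) <;>
      rcases hpm j with hj | hj <;> rcases hpm e with he' | he' <;>
      (try simp only [hj, he']) <;> ring
  have Eγ3 : ∀ e : ℤ, γ (4*e+3)
      = ((-((-1:ℝ)^e)) * δ e + γ (e+1) + δ (e+1) + ((-1:ℝ)^e) * γ (e+1))/4 := by
    intro e
    refine quarter ?_ (hbu (4*e+3)) (hγ (4*e+3))
      (tendsto_cAvg_const_mul (-((-1:ℝ)^e)) (hδ e))
      (hγ (e+1))
      (hδ (e+1))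
      (tendsto_cAvg_const_mul ((-1:ℝ)^e) (hγ (e+1)))
    intro j
    refine ⟨?_, ?_, ?_, ?_⟩ <;>
      [rw [show 4*j + (4*e+3) = 4*(j+e)+3 by ring, (hrec j).1, (hrec (j+e)).2.2.2];
       rw [show 4*j+1 + (4*e+3) = 4*(j+e+1) by ring, (hrec j).2.1, (hrec (j+e+1)).1];
       rw [show 4*j+2 + (4*e+3) = 4*(j+e+1)+1 by ring, (hrec j).2.2.1, (hrec (j+e+1)).2.1];
       rw [show 4*j+3 + (4*e+3) = 4*(j+e+1)+2 by ring, (hrec j).2.2.2, (hrec (j+e+1)).2.2.1]] <;>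
      (try rw [show j + (e+1) = j+e+1 by ring]) <;>
      (try simp only [hzadd, hzone, hz2, hz3]) <;>
      rcases hpm j with hj | hj <;> rcases hpm e with he' | he' <;>
      (try simp only [hj, he']) <;> ring
  have Eδ0 : ∀ e : ℤ, δ (4*e) = (γ e + (-1:ℝ) * γ e + ((-1:ℝ)^e) * γ e + (-((-1:ℝ)^e)) * γ e)/4 := by
    intro e
    refine quarter ?_ (hbv (4*e)) (hδ (4*e)) (hγ e)
      (tendsto_cAvg_const_mul (-1:ℝ) (hγ e))
      (tendsto_cAvg_const_mul ((-1:ℝ)^e) (hγ e))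
      (tendsto_cAvg_const_mul (-((-1:ℝ)^e)) (hγ e))
    intro j
    refine ⟨?_, ?_, ?_, ?_⟩ <;>
      [rw [show 4*j + (4*e) = 4*(j+e) by ring, (hrec j).1, (hrec (j+e)).1, hz40];
       rw [show 4*j+1 + (4*e) = 4*(j+e)+1 by ring, (hrec j).2.1, (hrec (j+e)).2.1, hz4 j 1];
       rw [show 4*j+2 + (4*e) = 4*(j+e)+2 by ring, (hrec j).2.2.1, (hrec (j+e)).2.2.1, hz4 j 2];
       rw [show 4*j+3 + (4*e) = 4*(j+e)+3 by ring, (hrec j).2.2.2, (hrec (j+e)).2.2.2, hz4 j 3]] <;>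
      (try simp only [hzadd, hzone, hz2, hz3]) <;>
      rcases hpm j with hj | hj <;> rcases hpm e with he' | he' <;>
      (try simp only [hj, he']) <;> ring
  have Eδ1 : ∀ e : ℤ, δ (4*e+1)
      = (γ e + (-((-1:ℝ)^e)) * δ e + (-((-1:ℝ)^e)) * γ e + δ (e+1))/4 := by
    intro e
    refine quarter ?_ (hbv (4*e+1)) (hδ (4*e+1)) (hγ e)
      (tendsto_cAvg_const_mul (-((-1:ℝ)^e)) (hδ e))
      (tendsto_cAvg_const_mul (-((-1:ℝ)^e)) (hγ e))
      (hδ (e+1))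
    intro j
    refine ⟨?_, ?_, ?_, ?_⟩ <;>
      [rw [show 4*j + (4*e+1) = 4*(j+e)+1 by ring, (hrec j).1, (hrec (j+e)).2.1, hz40];
       rw [show 4*j+1 + (4*e+1) = 4*(j+e)+2 by ring, (hrec j).2.1, (hrec (j+e)).2.2.1, hz4 j 1];
       rw [show 4*j+2 + (4*e+1) = 4*(j+e)+3 by ring, (hrec j).2.2.1, (hrec (j+e)).2.2.2, hz4 j 2];
       rw [show 4*j+3 + (4*e+1) = 4*(j+e+1) by ring, (hrec j).2.2.2, (hrec (j+e+1)).1, hz4 j 3]] <;>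
      (try rw [show j + (e+1) = j+e+1 by ring]) <;>
      (try simp only [hzadd, hzone, hz2, hz3]) <;>
      rcases hpm j with hj | hj <;> rcases hpm e with he' | he' <;>
      (try simp only [hj, he']) <;> ring
  have Eδ2 : ∀ e : ℤ, δ (4*e+2)
      = (((-1:ℝ)^e) * δ e + ((-1:ℝ)^e) * δ e + δ (e+1) + δ (e+1))/4 := by
    intro e
    refine quarter ?_ (hbv (4*e+2)) (hδ (4*e+2))
      (tendsto_cAvg_const_mul ((-1:ℝ)^e) (hδ e))
      (tendsto_cAvg_const_mul ((-1:ℝ)^e) (hδ e))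
      (hδ (e+1))
      (hδ (e+1))
    intro j
    refine ⟨?_, ?_, ?_, ?_⟩ <;>
      [rw [show 4*j + (4*e+2) = 4*(j+e)+2 by ring, (hrec j).1, (hrec (j+e)).2.2.1, hz40];
       rw [show 4*j+1 + (4*e+2) = 4*(j+e)+3 by ring, (hrec j).2.1, (hrec (j+e)).2.2.2, hz4 j 1];
       rw [show 4*j+2 + (4*e+2) = 4*(j+e+1) by ring, (hrec j).2.2.1, (hrec (j+e+1)).1, hz4 j 2];
       rw [show 4*j+3 + (4*e+2) = 4*(j+e+1)+1 by ring, (hrec j).2.2.2, (hrec (j+e+1)).2.1, hz4 j 3]] <;>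
      (try rw [show j + (e+1) = j+e+1 by ring]) <;>
      (try simp only [hzadd, hzone, hz2, hz3]) <;>
      rcases hpm j with hj | hj <;> rcases hpm e with he' | he' <;>
      (try simp only [hj, he']) <;> ring
  have Eδ3 : ∀ e : ℤ, δ (4*e+3)
      = ((-((-1:ℝ)^e)) * δ e + (-1:ℝ) * γ (e+1) + δ (e+1) + (-((-1:ℝ)^e)) * γ (e+1))/4 := by
    intro e
    refine quarter ?_ (hbv (4*e+3)) (hδ (4*e+3))
      (tendsto_cAvg_const_mul (-((-1:ℝ)^e)) (hδ e))
      (tendsto_cAvg_const_mul (-1:ℝ) (hγ (e+1)))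
      (hδ (e+1))
      (tendsto_cAvg_const_mul (-((-1:ℝ)^e)) (hγ (e+1)))
    intro j
    refine ⟨?_, ?_, ?_, ?_⟩ <;>
      [rw [show 4*j + (4*e+3) = 4*(j+e)+3 by ring, (hrec j).1, (hrec (j+e)).2.2.2, hz40];
       rw [show 4*j+1 + (4*e+3) = 4*(j+e+1) by ring, (hrec j).2.1, (hrec (j+e+1)).1, hz4 j 1];
       rw [show 4*j+2 + (4*e+3) = 4*(j+e+1)+1 by ring, (hrec j).2.2.1, (hrec (j+e+1)).2.1, hz4 j 2];
       rw [show 4*j+3 + (4*e+3) = 4*(j+e+1)+2 by ring, (hrec j).2.2.2, (hrec (j+e+1)).2.2.1, hz4 j 3]] <;>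
      (try rw [show j + (e+1) = j+e+1 by ring]) <;>
      (try simp only [hzadd, hzone, hz2, hz3]) <;>
      rcases hpm j with hj | hj <;> rcases hpm e with he' | he' <;>
      (try simp only [hj, he']) <;> ring
  -- strong induction on |d|
  suffices H : ∀ n : ℕ, ∀ d : ℤ, d.natAbs ≤ n → ((d ≠ 0 → γ d = 0) ∧ δ d = 0) by
    intro d; exact H d.natAbs d le_rfl
  intro n
  induction n with
  | zero =>
    intro d hd
    have hd0 : d = 0 := by omega
    subst hd0
    refine ⟨fun h => absurd rfl h, ?_⟩
    have h0 := Eδ0 0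
    norm_num at h0
    exact h0
  | succ n IH =>
    intro d hd
    by_cases hdn : d.natAbs ≤ n
    · exact IH d hdn
    · have hδ0 : δ 0 = 0 := by
        have h0 := Eδ0 0
        norm_num at h0
        exact h0
      have hcases : d = 1 ∨ d = -1 ∨ 2 ≤ d.natAbs := by omega
      rcases hcases with h1 | h1 | h1
      · subst h1
        have e1 := Eδ1 0
        have e2 := Eγ1 0
        norm_num at e1 e2
        have hδ1 : δ 1 = 0 := by linarith
        exact ⟨fun _ => by linarith, hδ1⟩
      · subst h1
        have e1 := Eδ3 (-1)
        have e2 := Eγ3 (-1)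
        norm_num at e1 e2
        have hδm : δ (-1) = 0 := by linarith
        exact ⟨fun _ => by linarith, hδm⟩
      · obtain ⟨e, r, hr0, hr4, rfl⟩ : ∃ e r, 0 ≤ r ∧ r < 4 ∧ d = 4*e+r :=
          ⟨d/4, d%4, Int.emod_nonneg d (by norm_num), Int.emod_lt_of_pos d (by norm_num),
            by omega⟩
        have hena : e.natAbs ≤ n := by omega
        have he1na : (e+1).natAbs ≤ n := by omega
        obtain ⟨hγe, hδe⟩ := IH e hena
        obtain ⟨hγe1, hδe1⟩ := IH (e+1) he1na
        have hrcases : r = 0 ∨ r = 1 ∨ r = 2 ∨ r = 3 := by omega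
        rcases hrcases with h | h | h | h <;> subst h
        · have hene : e ≠ 0 := by omega
          have hge : γ e = 0 := hγe hene
          rw [show 4*e+0 = 4*e by ring]
          refine ⟨fun _ => ?_, ?_⟩
          · rw [Eγ0 e, hge]; ring
          · rw [Eδ0 e]; ring
        · have hene : e ≠ 0 := by omega
          have hge : γ e = 0 := hγe hene
          refine ⟨fun _ => ?_, ?_⟩
          · rw [Eγ1 e, hge, hδe, hδe1]; ring
          · rw [Eδ1 e, hge, hδe, hδe1]; ring
        · refine ⟨fun _ => ?_, ?_⟩
          · rw [Eγ2 e]; ring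
          · rw [Eδ2 e, hδe, hδe1]; ring
        · have hene : e + 1 ≠ 0 := by omega
          have hge1 : γ (e+1) = 0 := hγe1 hene
          refine ⟨fun _ => ?_, ?_⟩
          · rw [Eγ3 e, hge1, hδe, hδe1]; ring
          · rw [Eδ3 e, hge1, hδe, hδe1]; ring

lemma sum_swap_inner {α : Type*} [AddCommMonoid α] (K : Finset ℕ) (I : Finset ℤ)
    (Y : ℕ → ℤ → ℤ → α) :
    ∑ m ∈ K, ∑ i ∈ I, ∑ j ∈ I, Y m i j = ∑ i ∈ I, ∑ j ∈ I, ∑ m ∈ K, Y m i j := by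
  rw [Finset.sum_comm]
  exact Finset.sum_congr rfl (fun i _ => Finset.sum_comm)

lemma sum_swap5 {α : Type*} [AddCommMonoid α] (K : Finset ℕ) (I : Finset ℤ)
    (X : ℕ → ℕ → ℕ → ℤ → ℤ → α) :
    ∑ m₁ ∈ K, ∑ m₂ ∈ K, ∑ m₃ ∈ K, ∑ i ∈ I, ∑ j ∈ I, X m₁ m₂ m₃ i j
      = ∑ i ∈ I, ∑ j ∈ I, ∑ m₁ ∈ K, ∑ m₂ ∈ K, ∑ m₃ ∈ K, X m₁ m₂ m₃ i j := by
  calc ∑ m₁ ∈ K, ∑ m₂ ∈ K, ∑ m₃ ∈ K, ∑ i ∈ I, ∑ j ∈ I, X m₁ m₂ m₃ i j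
      = ∑ m₁ ∈ K, ∑ m₂ ∈ K, ∑ i ∈ I, ∑ j ∈ I, ∑ m₃ ∈ K, X m₁ m₂ m₃ i j := by
        exact Finset.sum_congr rfl (fun m₁ _ => Finset.sum_congr rfl
          (fun m₂ _ => sum_swap_inner K I _))
    _ = ∑ m₁ ∈ K, ∑ i ∈ I, ∑ j ∈ I, ∑ m₂ ∈ K, ∑ m₃ ∈ K, X m₁ m₂ m₃ i j := by
        exact Finset.sum_congr rfl (fun m₁ _ => sum_swap_inner K I _)
    _ = ∑ i ∈ I, ∑ j ∈ I, ∑ m₁ ∈ K, ∑ m₂ ∈ K, ∑ m₃ ∈ K, X m₁ m₂ m₃ i j :=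
        sum_swap_inner K I _

lemma sum_swap4 {α : Type*} [AddCommMonoid α] (K : Finset ℕ) (I : Finset ℤ)
    (X : ℤ → ℤ → ℕ → ℕ → α) :
    ∑ i ∈ I, ∑ j ∈ I, ∑ m ∈ K, ∑ m' ∈ K, X i j m m'
      = ∑ m ∈ K, ∑ m' ∈ K, ∑ i ∈ I, ∑ j ∈ I, X i j m m' := by
  calc ∑ i ∈ I, ∑ j ∈ I, ∑ m ∈ K, ∑ m' ∈ K, X i j m m'
      = ∑ i ∈ I, ∑ m ∈ K, ∑ j ∈ I, ∑ m' ∈ K, X i j m m' := by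
        exact Finset.sum_congr rfl (fun i _ => Finset.sum_comm)
    _ = ∑ m ∈ K, ∑ i ∈ I, ∑ j ∈ I, ∑ m' ∈ K, X i j m m' := Finset.sum_comm
    _ = ∑ m ∈ K, ∑ i ∈ I, ∑ m' ∈ K, ∑ j ∈ I, X i j m m' := by
        exact Finset.sum_congr rfl (fun m _ => Finset.sum_congr rfl
          (fun i _ => Finset.sum_comm))
    _ = ∑ m ∈ K, ∑ m' ∈ K, ∑ i ∈ I, ∑ j ∈ I, X i j m m' := by
        exact Finset.sum_congr rfl (fun m _ => Finset.sum_comm)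

lemma cube_expand {ι : Type*} (K : Finset ι) (b : ι → ℝ) :
    (∑ m ∈ K, b m)^3 = ∑ m₁ ∈ K, ∑ m₂ ∈ K, ∑ m₃ ∈ K, b m₁ * b m₂ * b m₃ := by
  calc (∑ m ∈ K, b m)^3
      = (∑ m₁ ∈ K, b m₁) * ((∑ m₂ ∈ K, b m₂) * (∑ m₃ ∈ K, b m₃)) := by ring
    _ = ∑ m₁ ∈ K, b m₁ * ((∑ m₂ ∈ K, b m₂) * (∑ m₃ ∈ K, b m₃)) := Finset.sum_mul _ _ _
    _ = ∑ m₁ ∈ K, ∑ m₂ ∈ K, ∑ m₃ ∈ K, b m₁ * b m₂ * b m₃ := by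
        refine Finset.sum_congr rfl (fun m₁ _ => ?_)
        rw [Finset.sum_mul_sum, Finset.mul_sum]
        refine Finset.sum_congr rfl (fun m₂ _ => ?_)
        rw [Finset.mul_sum]
        exact Finset.sum_congr rfl (fun m₃ _ => by ring)

lemma sq_expand {ι : Type*} (K : Finset ι) (b : ι → ℝ) :
    (∑ m ∈ K, b m)^2 = ∑ m ∈ K, ∑ m' ∈ K, b m * b m' := by
  rw [pow_two, Finset.sum_mul_sum]

lemma mean_bound (a w : ℤ → ℝ) (ha1 : ∀ i, |a i| ≤ 1) (hw1 : ∀ i, |w i| ≤ 1)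
    (ρ : ℤ → ℤ → ℤ → ℝ)
    (hρ : ∀ m₁ m₂ m₃ : ℤ, Tendsto (fun N : ℕ => (1 / (2 * (N : ℝ) + 1)) *
        ∑ i ∈ Finset.Icc (-(N : ℤ)) (N : ℤ), w i * (a (i + m₁) * a (i + m₂) * a (i + m₃)))
      atTop (nhds (ρ m₁ m₂ m₃)))
    (g : ℤ → ℝ) (hg1 : g 0 ^ 2 ≤ 1) (hg0 : ∀ d : ℤ, d ≠ 0 → g d = 0)
    (hgam : ∀ m m' : ℤ, Tendsto (fun N : ℕ => (1 / (2 * (N : ℝ) + 1)) *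
        ∑ i ∈ Finset.Icc (-(N : ℤ)) (N : ℤ), a (i + m) * a (i + m'))
      atTop (nhds (g (m' - m))))
    (M : ℕ) :
    ∑ m₁ ∈ Finset.range M, ∑ m₂ ∈ Finset.range M, ∑ m₃ ∈ Finset.range M,
      (ρ (m₁ : ℤ) (m₂ : ℤ) (m₃ : ℤ))^2 ≤ (M:ℝ)^2 := by
  set K := Finset.range M with hK
  set T : ℕ → ℝ := fun N => ∑ m₁ ∈ K, ∑ m₂ ∈ K, ∑ m₃ ∈ K,
    ((1 / (2 * (N : ℝ) + 1)) * ∑ i ∈ Finset.Icc (-(N : ℤ)) (N : ℤ),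
      w i * (a (i + (m₁:ℤ)) * a (i + (m₂:ℤ)) * a (i + (m₃:ℤ))))^2 with hT
  set U : ℕ → ℝ := fun N => (M:ℝ) * ∑ m ∈ K, ∑ m' ∈ K,
    ((1 / (2 * (N : ℝ) + 1)) * ∑ i ∈ Finset.Icc (-(N : ℤ)) (N : ℤ),
      a (i + (m:ℤ)) * a (i + (m':ℤ)))^2 with hU
  have hTlim : Tendsto T atTop (nhds (∑ m₁ ∈ K, ∑ m₂ ∈ K, ∑ m₃ ∈ K,
      (ρ (m₁ : ℤ) (m₂ : ℤ) (m₃ : ℤ))^2)) := by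
    refine tendsto_finset_sum _ (fun m₁ _ => ?_)
    refine tendsto_finset_sum _ (fun m₂ _ => ?_)
    refine tendsto_finset_sum _ (fun m₃ _ => ?_)
    exact (hρ m₁ m₂ m₃).pow 2
  have hUlim : Tendsto U atTop (nhds ((M:ℝ) * ∑ m ∈ K, ∑ m' ∈ K, (g ((m':ℤ) - (m:ℤ)))^2)) := by
    refine Tendsto.const_mul _ ?_
    refine tendsto_finset_sum _ (fun m _ => ?_)
    refine tendsto_finset_sum _ (fun m' _ => ?_)
    exact (hgam m m').pow 2
  have hTU : ∀ N, T N ≤ U N := by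
    intro N
    set I := Finset.Icc (-(N : ℤ)) (N : ℤ) with hI
    set c : ℝ := 1 / (2 * (N : ℝ) + 1) with hc
    have hc0 : 0 ≤ c := by positivity
    set P : ℤ → ℤ → ℝ := fun i j => ∑ m ∈ K, a (i + (m:ℤ)) * a (j + (m:ℤ)) with hP
    have hPabs : ∀ i j, |P i j| ≤ (M:ℝ) := by
      intro i j
      calc |P i j| ≤ ∑ m ∈ K, |a (i + (m:ℤ)) * a (j + (m:ℤ))| := Finset.abs_sum_le_sum_abs _ _
        _ ≤ ∑ m ∈ K, 1 := Finset.sum_le_sum (fun m _ => by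
            rw [abs_mul]
            calc |a (i + (m:ℤ))| * |a (j + (m:ℤ))| ≤ 1 * 1 :=
              mul_le_mul (ha1 _) (ha1 _) (abs_nonneg _) zero_le_one
            _ = 1 := by ring)
        _ = (M:ℝ) := by simp [hK]
    -- Step 1: T N = c^2 * ∑_i ∑_j (w i * w j) * (P i j)^3
    have e1 : T N = c^2 * ∑ i ∈ I, ∑ j ∈ I, (w i * w j) * (P i j)^3 := by
      have expand : ∀ m₁ m₂ m₃ : ℕ,
          ((c * ∑ i ∈ I, w i * (a (i + (m₁:ℤ)) * a (i + (m₂:ℤ)) * a (i + (m₃:ℤ)))))^2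
          = c^2 * ∑ i ∈ I, ∑ j ∈ I, (w i * w j) *
              ((a (i + (m₁:ℤ)) * a (j + (m₁:ℤ))) * (a (i + (m₂:ℤ)) * a (j + (m₂:ℤ)))
                * (a (i + (m₃:ℤ)) * a (j + (m₃:ℤ)))) := by
        intro m₁ m₂ m₃
        rw [mul_pow, sq_expand]
        congr 1
        refine Finset.sum_congr rfl (fun i _ => ?_)
        refine Finset.sum_congr rfl (fun j _ => ?_)
        ring
      calc T N = ∑ m₁ ∈ K, ∑ m₂ ∈ K, ∑ m₃ ∈ K, c^2 * ∑ i ∈ I, ∑ j ∈ I, (w i * w j) *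
            ((a (i + (m₁:ℤ)) * a (j + (m₁:ℤ))) * (a (i + (m₂:ℤ)) * a (j + (m₂:ℤ)))
              * (a (i + (m₃:ℤ)) * a (j + (m₃:ℤ)))) := by
            refine Finset.sum_congr rfl (fun m₁ _ => ?_)
            refine Finset.sum_congr rfl (fun m₂ _ => ?_)
            refine Finset.sum_congr rfl (fun m₃ _ => ?_)
            exact expand m₁ m₂ m₃
        _ = c^2 * ∑ m₁ ∈ K, ∑ m₂ ∈ K, ∑ m₃ ∈ K, ∑ i ∈ I, ∑ j ∈ I, (w i * w j) *
            ((a (i + (m₁:ℤ)) * a (j + (m₁:ℤ))) * (a (i + (m₂:ℤ)) * a (j + (m₂:ℤ)))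
              * (a (i + (m₃:ℤ)) * a (j + (m₃:ℤ)))) := by
            rw [Finset.mul_sum]
            refine Finset.sum_congr rfl (fun m₁ _ => ?_)
            rw [Finset.mul_sum]
            refine Finset.sum_congr rfl (fun m₂ _ => ?_)
            rw [Finset.mul_sum]
        _ = c^2 * ∑ i ∈ I, ∑ j ∈ I, ∑ m₁ ∈ K, ∑ m₂ ∈ K, ∑ m₃ ∈ K, (w i * w j) *
            ((a (i + (m₁:ℤ)) * a (j + (m₁:ℤ))) * (a (i + (m₂:ℤ)) * a (j + (m₂:ℤ)))
              * (a (i + (m₃:ℤ)) * a (j + (m₃:ℤ)))) := by rw [sum_swap5]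
        _ = c^2 * ∑ i ∈ I, ∑ j ∈ I, (w i * w j) * (P i j)^3 := by
            congr 1
            refine Finset.sum_congr rfl (fun i _ => ?_)
            refine Finset.sum_congr rfl (fun j _ => ?_)
            rw [hP, cube_expand]
            rw [Finset.mul_sum]
            refine Finset.sum_congr rfl (fun m₁ _ => ?_)
            rw [Finset.mul_sum]
            refine Finset.sum_congr rfl (fun m₂ _ => ?_)
            rw [Finset.mul_sum]
    -- Step 2: pointwise bound
    have e2 : ∑ i ∈ I, ∑ j ∈ I, (w i * w j) * (P i j)^3
        ≤ ∑ i ∈ I, ∑ j ∈ I, (M:ℝ) * (P i j)^2 := by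
      refine Finset.sum_le_sum (fun i _ => Finset.sum_le_sum (fun j _ => ?_))
      calc (w i * w j) * (P i j)^3 ≤ |(w i * w j) * (P i j)^3| := le_abs_self _
        _ = (|w i| * |w j|) * (|P i j| * (P i j)^2) := by
            rw [abs_mul, abs_mul, abs_pow]
            rw [show |P i j|^3 = |P i j| * |P i j|^2 by ring, sq_abs]
        _ ≤ (1 * 1) * ((M:ℝ) * (P i j)^2) := by
            refine mul_le_mul (mul_le_mul (hw1 i) (hw1 j) (abs_nonneg _) zero_le_one)
              (mul_le_mul_of_nonneg_right (hPabs i j) (sq_nonneg _)) ?_ (by norm_num)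
            positivity
        _ = (M:ℝ) * (P i j)^2 := by ring
    -- Step 3: ∑_i ∑_j (P i j)^2 = ∑_m ∑_m' D^2
    have e3 : ∑ i ∈ I, ∑ j ∈ I, (P i j)^2
        = ∑ m ∈ K, ∑ m' ∈ K, (∑ i ∈ I, a (i + (m:ℤ)) * a (i + (m':ℤ)))^2 := by
      calc ∑ i ∈ I, ∑ j ∈ I, (P i j)^2
          = ∑ i ∈ I, ∑ j ∈ I, ∑ m ∈ K, ∑ m' ∈ K,
              (a (i + (m:ℤ)) * a (i + (m':ℤ))) * (a (j + (m:ℤ)) * a (j + (m':ℤ))) := by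
            refine Finset.sum_congr rfl (fun i _ => Finset.sum_congr rfl (fun j _ => ?_))
            rw [hP, sq_expand]
            refine Finset.sum_congr rfl (fun m _ => ?_)
            refine Finset.sum_congr rfl (fun m' _ => ?_)
            ring
        _ = ∑ m ∈ K, ∑ m' ∈ K, ∑ i ∈ I, ∑ j ∈ I,
              (a (i + (m:ℤ)) * a (i + (m':ℤ))) * (a (j + (m:ℤ)) * a (j + (m':ℤ))) := by
            rw [sum_swap4]
        _ = ∑ m ∈ K, ∑ m' ∈ K, (∑ i ∈ I, a (i + (m:ℤ)) * a (i + (m':ℤ)))^2 := by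
            refine Finset.sum_congr rfl (fun m _ => Finset.sum_congr rfl (fun m' _ => ?_))
            rw [pow_two, Finset.sum_mul_sum]
    calc T N = c^2 * ∑ i ∈ I, ∑ j ∈ I, (w i * w j) * (P i j)^3 := e1
      _ ≤ c^2 * ∑ i ∈ I, ∑ j ∈ I, (M:ℝ) * (P i j)^2 := by
          exact mul_le_mul_of_nonneg_left e2 (by positivity)
      _ = (M:ℝ) * (c^2 * ∑ i ∈ I, ∑ j ∈ I, (P i j)^2) := by
          simp only [Finset.mul_sum]
          refine Finset.sum_congr rfl (fun i _ => ?_)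
          refine Finset.sum_congr rfl (fun j _ => ?_)
          ring
      _ = (M:ℝ) * (c^2 * ∑ m ∈ K, ∑ m' ∈ K, (∑ i ∈ I, a (i + (m:ℤ)) * a (i + (m':ℤ)))^2) := by
          rw [e3]
      _ = U N := by
          rw [hU]
          congr 1
          rw [Finset.mul_sum]
          refine Finset.sum_congr rfl (fun m _ => ?_)
          rw [Finset.mul_sum]
          refine Finset.sum_congr rfl (fun m' _ => ?_)
          rw [← mul_pow]
  -- limit of U is ≤ M^2
  have hdiag : ∑ m ∈ K, ∑ m' ∈ K, (g ((m':ℤ) - (m:ℤ)))^2 ≤ (M:ℝ) := by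
    have hinner : ∀ m ∈ K, ∑ m' ∈ K, (g ((m':ℤ) - (m:ℤ)))^2 ≤ 1 := by
      intro m hm
      have : ∑ m' ∈ K, (g ((m':ℤ) - (m:ℤ)))^2 = (g 0)^2 := by
        rw [Finset.sum_eq_single_of_mem m hm]
        · rw [sub_self]
        · intro b _ hb
          rw [hg0 _ (by
            intro hcontra
            apply hb
            have : (b:ℤ) = (m:ℤ) := by omega
            exact_mod_cast this)]
          ring
      rw [this]; exact hg1
    calc ∑ m ∈ K, ∑ m' ∈ K, (g ((m':ℤ) - (m:ℤ)))^2 ≤ ∑ m ∈ K, 1 :=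
        Finset.sum_le_sum hinner
      _ = (M:ℝ) := by simp [hK]
  have hUb : (M:ℝ) * ∑ m ∈ K, ∑ m' ∈ K, (g ((m':ℤ) - (m:ℤ)))^2 ≤ (M:ℝ)^2 := by
    calc (M:ℝ) * ∑ m ∈ K, ∑ m' ∈ K, (g ((m':ℤ) - (m:ℤ)))^2 ≤ (M:ℝ) * (M:ℝ) :=
        mul_le_mul_of_nonneg_left hdiag (by positivity)
      _ = (M:ℝ)^2 := by ring
  exact le_trans (le_of_tendsto_of_tendsto' hTlim hUlim hTU) hUb

lemma sq_sum_le (M : ℕ) (f : ℕ → ℝ) :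
    (∑ x ∈ Finset.range M, f x)^2 ≤ (M:ℝ) * ∑ x ∈ Finset.range M, (f x)^2 := by
  have := Finset.sum_mul_sq_le_sq_mul_sq (Finset.range M) (fun _ => (1:ℝ)) f
  simpa using this

lemma conclude (ρ : ℤ → ℤ → ℤ → ℝ)
    (h : ∀ M : ℕ, ∑ m₁ ∈ Finset.range M, ∑ m₂ ∈ Finset.range M, ∑ m₃ ∈ Finset.range M,
      (ρ (m₁ : ℤ) (m₂ : ℤ) (m₃ : ℤ))^2 ≤ (M:ℝ)^2) :
    Tendsto (fun M : ℕ => (1 / (M : ℝ) ^ 3) *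
        ∑ m₁ ∈ Finset.range M, ∑ m₂ ∈ Finset.range M, ∑ m₃ ∈ Finset.range M,
          |ρ (m₁ : ℤ) (m₂ : ℤ) (m₃ : ℤ)|)
      atTop (nhds 0) := by
  have hnn : ∀ M : ℕ, 0 ≤ (1 / (M : ℝ) ^ 3) *
      ∑ m₁ ∈ Finset.range M, ∑ m₂ ∈ Finset.range M, ∑ m₃ ∈ Finset.range M,
        |ρ (m₁ : ℤ) (m₂ : ℤ) (m₃ : ℤ)| := by
    intro M
    apply mul_nonneg (by positivity)
    exact Finset.sum_nonneg (fun _ _ => Finset.sum_nonneg (fun _ _ =>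
      Finset.sum_nonneg (fun _ _ => abs_nonneg _)))
  apply squeeze_zero' (g := fun M : ℕ => Real.sqrt (1 / (M:ℝ)))
  · filter_upwards with M; exact hnn M
  · filter_upwards [eventually_ge_atTop 1] with M hM
    have hM0 : (0:ℝ) < (M:ℝ) := by exact_mod_cast hM
    set S := ∑ m₁ ∈ Finset.range M, ∑ m₂ ∈ Finset.range M, ∑ m₃ ∈ Finset.range M,
      |ρ (m₁ : ℤ) (m₂ : ℤ) (m₃ : ℤ)| with hS
    set Q := ∑ m₁ ∈ Finset.range M, ∑ m₂ ∈ Finset.range M, ∑ m₃ ∈ Finset.range M,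
      (ρ (m₁ : ℤ) (m₂ : ℤ) (m₃ : ℤ))^2 with hQ
    have hQnn : 0 ≤ Q := by
      apply Finset.sum_nonneg (fun _ _ => Finset.sum_nonneg (fun _ _ =>
        Finset.sum_nonneg (fun _ _ => sq_nonneg _)))
    have key : S^2 ≤ (M:ℝ)^3 * Q := by
      calc S^2 ≤ (M:ℝ) * ∑ m₁ ∈ Finset.range M,
            (∑ m₂ ∈ Finset.range M, ∑ m₃ ∈ Finset.range M, |ρ (m₁:ℤ) (m₂:ℤ) (m₃:ℤ)|)^2 :=
          sq_sum_le M _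
        _ ≤ (M:ℝ) * ∑ m₁ ∈ Finset.range M, ((M:ℝ) * ∑ m₂ ∈ Finset.range M,
            (∑ m₃ ∈ Finset.range M, |ρ (m₁:ℤ) (m₂:ℤ) (m₃:ℤ)|)^2) := by
          refine mul_le_mul_of_nonneg_left (Finset.sum_le_sum (fun m₁ _ => ?_)) hM0.le
          exact sq_sum_le M _
        _ ≤ (M:ℝ) * ∑ m₁ ∈ Finset.range M, ((M:ℝ) * ∑ m₂ ∈ Finset.range M,
            ((M:ℝ) * ∑ m₃ ∈ Finset.range M, |ρ (m₁:ℤ) (m₂:ℤ) (m₃:ℤ)|^2)) := by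
          refine mul_le_mul_of_nonneg_left (Finset.sum_le_sum (fun m₁ _ => ?_)) hM0.le
          refine mul_le_mul_of_nonneg_left (Finset.sum_le_sum (fun m₂ _ => ?_)) hM0.le
          exact sq_sum_le M _
        _ = (M:ℝ)^3 * Q := by
          rw [hQ]
          simp only [Finset.mul_sum, sq_abs]
          refine Finset.sum_congr rfl (fun m₁ _ => ?_)
          refine Finset.sum_congr rfl (fun m₂ _ => ?_)
          refine Finset.sum_congr rfl (fun m₃ _ => ?_)
          ring
    have hfin : ((1 / (M : ℝ) ^ 3) * S)^2 ≤ 1 / (M:ℝ) := by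
      have h1 : S^2 ≤ (M:ℝ)^3 * (M:ℝ)^2 :=
        key.trans (mul_le_mul_of_nonneg_left (h M) (by positivity))
      have h2 : ((1 / (M : ℝ) ^ 3) * S)^2 = S^2 / (M:ℝ)^6 := by
        rw [mul_pow, div_pow, one_pow, ← pow_mul]
        norm_num
        rw [inv_mul_eq_div]
      rw [h2]
      rw [div_le_div_iff₀ (by positivity) hM0]
      calc S^2 * (M:ℝ) ≤ ((M:ℝ)^3 * (M:ℝ)^2) * (M:ℝ) :=
          mul_le_mul_of_nonneg_right h1 hM0.le
        _ = 1 * (M:ℝ)^6 := by ring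
    have hSnn : 0 ≤ (1 / (M : ℝ) ^ 3) * S := hnn M
    exact (Real.le_sqrt hSnn (by positivity)).mpr hfin
  · have h1 : Tendsto (fun M : ℕ => 1/(M:ℝ)) atTop (nhds 0) :=
      tendsto_one_div_atTop_nhds_zero_nat
    have h2 : Tendsto Real.sqrt (nhds 0) (nhds 0) := by
      have := Real.continuous_sqrt.tendsto 0
      rwa [Real.sqrt_zero] at this
    exact h2.comp h1

theorem rudin_shapiro_four_point_mean_abs_vanishes (a : ℤ → ℝ)
    (ha : ∀ i, a i = 1 ∨ a i = -1)
    (hrec : ∀ m : ℤ, a (4 * m) = a m ∧ a (4 * m + 1) = a m ∧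
      a (4 * m + 2) = (-1 : ℝ) ^ m * a m ∧ a (4 * m + 3) = -((-1 : ℝ) ^ m) * a m)
    (η θ : ℤ → ℤ → ℤ → ℝ)
    (hη : ∀ m₁ m₂ m₃ : ℤ, Tendsto (fun N : ℕ =>
        (1 / (2 * (N : ℝ) + 1)) *
          ∑ i ∈ Finset.Icc (-(N : ℤ)) (N : ℤ),
            a i * a (i + m₁) * a (i + m₂) * a (i + m₃))
      atTop (nhds (η m₁ m₂ m₃)))
    (hθ : ∀ m₁ m₂ m₃ : ℤ, Tendsto (fun N : ℕ =>
        (1 / (2 * (N : ℝ) + 1)) *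
          ∑ i ∈ Finset.Icc (-(N : ℤ)) (N : ℤ),
            (-1 : ℝ) ^ i * a i * a (i + m₁) * a (i + m₂) * a (i + m₃))
      atTop (nhds (θ m₁ m₂ m₃))) :
    Tendsto (fun N : ℕ =>
        (1 / (N : ℝ) ^ 3) *
          ∑ m₁ ∈ Finset.range N, ∑ m₂ ∈ Finset.range N, ∑ m₃ ∈ Finset.range N,
            |η (m₁ : ℤ) (m₂ : ℤ) (m₃ : ℤ)|)
      atTop (nhds 0) ∧
    Tendsto (fun N : ℕ =>
        (1 / (N : ℝ) ^ 3) *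
          ∑ m₁ ∈ Finset.range N, ∑ m₂ ∈ Finset.range N, ∑ m₃ ∈ Finset.range N,
            |θ (m₁ : ℤ) (m₂ : ℤ) (m₃ : ℤ)|)
      atTop (nhds 0) := by
  have hsq : ∀ i, a i * a i = 1 := fun i => by rcases ha i with h | h <;> rw [h] <;> norm_num
  have hb1 : ∀ i, |a i| ≤ 1 := fun i => by rcases ha i with h | h <;> rw [h] <;> norm_num
  have hzadd : ∀ m n : ℤ, (-1:ℝ)^(m+n) = (-1:ℝ)^m * (-1:ℝ)^n := zpow_add₀ (by norm_num)
  have hpm : ∀ n : ℤ, (-1:ℝ)^n = 1 ∨ (-1:ℝ)^n = -1 := by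
    intro n
    rcases Int.even_or_odd n with h | h
    · left; exact h.neg_one_zpow
    · right
      obtain ⟨k, hk⟩ := h
      subst hk
      rw [hzadd, zpow_mul]
      norm_num
  have hw1 : ∀ i : ℤ, |(-1:ℝ)^i * a i| ≤ 1 := by
    intro i
    rw [abs_mul]
    rcases hpm i with h | h <;> rw [h] <;> simpa using hb1 i
  set γ : ℤ → ℝ := fun d => η d 0 0 with hγdef
  set δ' : ℤ → ℝ := fun d => θ d 0 0 with hδdef
  have hγ : ∀ d, Tendsto (cAvg (fun i => a i * a (i + d))) atTop (nhds (γ d)) := by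
    intro d
    refine Filter.Tendsto.congr (fun N => ?_) (hη d 0 0)
    simp only [cAvg]
    congr 1
    refine Finset.sum_congr rfl (fun i _ => ?_)
    rw [add_zero]
    linear_combination (a i * a (i + d)) * hsq i
  have hδ : ∀ d, Tendsto (cAvg (fun i => (-1:ℝ)^i * (a i * a (i + d)))) atTop (nhds (δ' d)) := by
    intro d
    refine Filter.Tendsto.congr (fun N => ?_) (hθ d 0 0)
    simp only [cAvg]
    congr 1
    refine Finset.sum_congr rfl (fun i _ => ?_)
    rw [add_zero]
    linear_combination ((-1:ℝ)^i * (a i * a (i + d))) * hsq i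
  have hvan := corr_vanish a ha hrec γ δ' hγ hδ
  have hγ0 : γ 0 = 1 := by
    have hone : Tendsto (cAvg (fun i => a i * a (i + 0))) atTop (nhds 1) := by
      have hconst : ∀ N : ℕ, cAvg (fun i => a i * a (i + 0)) N = 1 := by
        intro N
        have e1 : ∑ i ∈ Finset.Icc (-(N:ℤ)) (N:ℤ), a i * a (i + 0)
            = ∑ i ∈ Finset.Icc (-(N:ℤ)) (N:ℤ), (1:ℝ) :=
          Finset.sum_congr rfl (fun i _ => by rw [add_zero, hsq i])
        simp only [cAvg]
        rw [e1, Finset.sum_const, nsmul_eq_mul, mul_one, Int.card_Icc]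
        have h1 : ((N:ℤ) + 1 - -(N:ℤ)).toNat = 2*N+1 := by omega
        rw [h1]
        have h2 : (2*(N:ℝ)+1) ≠ 0 := by positivity
        push_cast
        field_simp
      rw [funext hconst]
      exact tendsto_const_nhds
    exact tendsto_nhds_unique (hγ 0) hone
  have hgam : ∀ m m' : ℤ, Tendsto (fun N : ℕ => (1 / (2 * (N : ℝ) + 1)) *
      ∑ i ∈ Finset.Icc (-(N : ℤ)) (N : ℤ), a (i + m) * a (i + m'))
      atTop (nhds (γ (m' - m))) := by
    intro m m'
    have hb : ∀ i, |a i * a (i + (m' - m))| ≤ 1 := by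
      intro i
      rw [abs_mul]
      calc |a i| * |a (i + (m' - m))| ≤ 1 * 1 :=
          mul_le_mul (hb1 _) (hb1 _) (abs_nonneg _) zero_le_one
        _ = 1 := by ring
    have h1 := cAvg_shift hb (hγ (m' - m)) m
    refine Filter.Tendsto.congr (fun N => ?_) h1
    simp only [cAvg]
    congr 1
    refine Finset.sum_congr rfl (fun i _ => ?_)
    rw [show i + m + (m' - m) = i + m' by ring]
  have hg0 : ∀ d : ℤ, d ≠ 0 → γ d = 0 := fun d hd => (hvan d).1 hd
  have hg1 : γ 0 ^ 2 ≤ 1 := by rw [hγ0]; norm_num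
  constructor
  · apply conclude
    intro M
    refine mean_bound a a hb1 hb1 η ?_ γ hg1 hg0 hgam M
    intro m₁ m₂ m₃
    refine Filter.Tendsto.congr (fun N => ?_) (hη m₁ m₂ m₃)
    congr 1
    refine Finset.sum_congr rfl (fun i _ => ?_)
    ring
  · apply conclude
    intro M
    refine mean_bound a (fun i => (-1:ℝ)^i * a i) hb1 hw1 θ ?_ γ hg1 hg0 hgam M
    intro m₁ m₂ m₃
    refine Filter.Tendsto.congr (fun N => ?_) (hθ m₁ m₂ m₃)
    congr 1
    refine Finset.sum_congr rfl (fun i _ => ?_)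
    ring
end

section
/- Suppose Σ, Θ : ℕ → ℝ are nonnegative functions bounded above by 1 satisfying Σ(4N) + Θ(4N) ≤ (15/16)(Σ(N) + Θ(N)) + C/N for all N ≥ 1 and some constant C > 0, and suppose Σ(4N+r) ≤ ((4N)³/(4N+r)³) Σ(4N) + C'/N for r ∈ {1,2,3} and some C' > 0 (and likewise for Θ). Then lim_{N→∞} Σ(N) = 0 and lim_{N→∞} Θ(N) = 0. -/
open Filter

theorem contraction_argument (Sig The : ℕ → ℝ) (C C' : ℝ)
    (hC : 0 < C) (hC' : 0 < C')
    (hS0 : ∀ N, 0 ≤ Sig N) (hS1 : ∀ N, Sig N ≤ 1)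
    (hT0 : ∀ N, 0 ≤ The N) (hT1 : ∀ N, The N ≤ 1)
    (hrec : ∀ N : ℕ, 1 ≤ N →
      Sig (4 * N) + The (4 * N) ≤ (15 / 16) * (Sig N + The N) + C / N)
    (hSstep : ∀ N : ℕ, 1 ≤ N → ∀ r : ℕ, r = 1 ∨ r = 2 ∨ r = 3 →
      Sig (4 * N + r) ≤ ((4 * N : ℝ) ^ 3 / ((4 * N + r : ℕ) : ℝ) ^ 3) * Sig (4 * N) + C' / N)
    (hTstep : ∀ N : ℕ, 1 ≤ N → ∀ r : ℕ, r = 1 ∨ r = 2 ∨ r = 3 →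
      The (4 * N + r) ≤ ((4 * N : ℝ) ^ 3 / ((4 * N + r : ℕ) : ℝ) ^ 3) * The (4 * N) + C' / N) :
    Tendsto Sig atTop (nhds 0) ∧ Tendsto The atTop (nhds 0) := by
  set F : ℕ → ℝ := fun N => Sig N + The N with hFdef
  have hF0 : ∀ N, 0 ≤ F N := fun N => add_nonneg (hS0 N) (hT0 N)
  have hF2 : ∀ N, F N ≤ 2 := fun N => by
    have := hS1 N; have := hT1 N; simp only [hFdef]; linarith
  set D : ℝ := C + 2 * C' with hDdef
  have hDpos : 0 < D := by positivity
  -- key recursion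
  have key : ∀ M : ℕ, 4 ≤ M → F M ≤ 15/16 * F (M/4) + D / ((M/4 : ℕ) : ℝ) := by
    intro M hM
    set N := M / 4 with hNdef
    have hN1 : 1 ≤ N := by omega
    have hNpos : (0:ℝ) < (N:ℝ) := by exact_mod_cast hN1
    have hrecN := hrec N hN1
    have hstep : ∀ r : ℕ, r = 1 ∨ r = 2 ∨ r = 3 →
        F (4 * N + r) ≤ F (4 * N) + 2 * C' / (N:ℝ) := by
      intro r hr
      have hden : (0:ℝ) < ((4 * N + r : ℕ) : ℝ) ^ 3 := by
        have : (0:ℕ) < 4 * N + r := by omega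
        positivity
      have hratio : ((4 * N : ℝ) ^ 3 / ((4 * N + r : ℕ) : ℝ) ^ 3) ≤ 1 := by
        rw [div_le_one hden]
        push_cast
        have h1 : (0:ℝ) ≤ 4 * (N:ℝ) := by positivity
        have h2 : (4:ℝ) * N ≤ 4 * N + r := by
          have : (0:ℝ) ≤ (r:ℝ) := Nat.cast_nonneg r
          linarith
        exact pow_le_pow_left₀ h1 h2 3
      have hratio0 : (0:ℝ) ≤ ((4 * N : ℝ) ^ 3 / ((4 * N + r : ℕ) : ℝ) ^ 3) := by positivity
      have hS := hSstep N hN1 r hr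
      have hT := hTstep N hN1 r hr
      have hS' : ((4 * N : ℝ) ^ 3 / ((4 * N + r : ℕ) : ℝ) ^ 3) * Sig (4 * N) ≤ Sig (4 * N) := by
        nlinarith [hS0 (4 * N)]
      have hT' : ((4 * N : ℝ) ^ 3 / ((4 * N + r : ℕ) : ℝ) ^ 3) * The (4 * N) ≤ The (4 * N) := by
        nlinarith [hT0 (4 * N)]
      simp only [hFdef]
      have h2C : 2 * C' / (N:ℝ) = C' / N + C' / N := by ring
      rw [h2C]
      linarith
    have hC'N : (0:ℝ) < C' / N := div_pos hC' hNpos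
    have hmain : F M ≤ 15/16 * F N + D / (N:ℝ) := by
      have hMod : M = 4 * N + M % 4 := by omega
      have hr4 : M % 4 = 0 ∨ M % 4 = 1 ∨ M % 4 = 2 ∨ M % 4 = 3 := by omega
      have hDsplit : D / (N:ℝ) = C / N + 2 * C' / N := by rw [hDdef]; ring
      rcases hr4 with h | h
      · have : M = 4 * N := by omega
        rw [this, hDsplit]
        have : (0:ℝ) < 2 * C' / N := by positivity
        simp only [hFdef]
        linarith
      · have hstepM := hstep (M % 4) h
        rw [← hMod] at hstepM
        rw [hDsplit]
        simp only [hFdef] at hstepM hrecN ⊢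
        linarith
    exact hmain
  -- limsup argument
  have hFbdd : IsBoundedUnder (· ≤ ·) atTop F :=
    isBoundedUnder_of ⟨2, fun n => hF2 n⟩
  have hFbddBelow : IsBoundedUnder (· ≥ ·) atTop F :=
    isBoundedUnder_of ⟨0, fun n => hF0 n⟩
  have hFcobdd : IsCoboundedUnder (· ≤ ·) atTop F := hFbddBelow.isCoboundedUnder_le
  set L : ℝ := limsup F atTop with hLdef
  have hdiv4 : Tendsto (fun M : ℕ => M / 4) atTop atTop := by
    apply tendsto_atTop_atTop.2
    intro b
    exact ⟨4 * b, fun M hM => by omega⟩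
  have hL : ∀ ε : ℝ, 0 < ε → L ≤ 15/16 * (L + ε) + ε := by
    intro ε hε
    have h1 : ∀ᶠ n in atTop, F n < L + ε :=
      eventually_lt_of_limsup_lt (by linarith) hFbdd
    have h2 : ∀ᶠ M in atTop, F (M / 4) < L + ε := hdiv4.eventually h1
    have h3 : Tendsto (fun M : ℕ => D / ((M / 4 : ℕ) : ℝ)) atTop (nhds 0) := by
      apply Tendsto.div_atTop (tendsto_const_nhds)
      exact tendsto_natCast_atTop_atTop.comp hdiv4
    have h4 : ∀ᶠ M in atTop, D / ((M / 4 : ℕ) : ℝ) ≤ ε := by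
      filter_upwards [h3.eventually (eventually_le_nhds hε)] with M hM using hM
    have h5 : ∀ᶠ M in atTop, F M ≤ 15/16 * (L + ε) + ε := by
      filter_upwards [h2, h4, eventually_ge_atTop 4] with M hM2 hM4 hMge
      have := key M hMge
      nlinarith
    exact limsup_le_of_le hFcobdd h5
  have hL0 : L ≤ 0 := by
    by_contra h
    push_neg at h
    have := hL (L / 62) (by linarith)
    linarith
  have hFtend : Tendsto F atTop (nhds 0) := by
    rw [NormedAddCommGroup.tendsto_nhds_zero]
    intro ε hε
    have h1 : ∀ᶠ n in atTop, F n < ε :=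
      eventually_lt_of_limsup_lt (lt_of_le_of_lt hL0 hε) hFbdd
    filter_upwards [h1] with n hn
    rw [Real.norm_of_nonneg (hF0 n)]
    exact hn
  constructor
  · exact squeeze_zero hS0 (fun n => le_add_of_nonneg_right (hT0 n)) hFtend
  · exact squeeze_zero hT0 (fun n => le_add_of_nonneg_left (hS0 n)) hFtend
end
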